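/- arXiv:0904.0221 — 7 statements merged into one kernel-verified Lean document; each statement's English description precedes it below -/
import Mathlib

section
/- For every dimension d ≥ 1 there exists K > 0 such that for every multi-index α ∈ ℕ^d and every y ∈ ℝ^d ∖ {0}, the α-th partial derivative of the function y ↦ |y|^{-1} (Euclidean norm) satisfies |∂^α(|·|^{-1})(y)| ≤ K^{|α|+1} · (α!) · |y|^{-|α|-1}. -/
/-!
The function `f = ‖·‖⁻¹` is invariant under linear isometries and homogeneous of degree `-1`,
so for a fixed unit vector `u` and every `y ≠ 0`,
`‖Dⁿ f(y)‖ = ‖Dⁿ f(u)‖ / ‖y‖ⁿ⁺¹` (any two vectors of the same norm are exchanged by a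
reflection). At `u` the function is real analytic, and the Cauchy estimates for its power
series give `‖Dⁿ f(u)‖ ≤ Kⁿ⁺¹ n!`. A partial derivative `∂^α f(y)` is `Dⁿ f(y)` evaluated on unit
vectors, with `n = |α|`, and `n! ≤ dⁿ α!` since multinomial coefficients are at most `dⁿ`.
-/

open scoped Nat

/-- Partial derivative in the `j`-th coordinate direction. -/
noncomputable def pd {d : ℕ} {A : Type*} [NormedAddCommGroup A] [NormedSpace ℝ A]
    (j : Fin d) (f : EuclideanSpace ℝ (Fin d) → A) : EuclideanSpace ℝ (Fin d) → A :=
  fun y => fderiv ℝ f y (EuclideanSpace.single j 1)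

/-- Iterated partial derivative `∂^α = ∂₁^{α₁} ⋯ ∂_d^{α_d}`. -/
noncomputable def mpd {d : ℕ} {A : Type*} [NormedAddCommGroup A] [NormedSpace ℝ A]
    (α : Fin d → ℕ) (f : EuclideanSpace ℝ (Fin d) → A) : EuclideanSpace ℝ (Fin d) → A :=
  (List.finRange d).foldr (fun j g => (pd j)^[α j] g) f

open scoped ContDiff

section IteratedDirDeriv

variable (𝕜 : Type*) [NontriviallyNormedField 𝕜] {E F : Type*} [NormedAddCommGroup E]
  [NormedSpace 𝕜 E] [NormedAddCommGroup F] [NormedSpace 𝕜 F]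

noncomputable def iteratedDirDeriv (L : List E) (f : E → F) : E → F :=
  L.foldr (fun v g y => fderiv 𝕜 g y v) f

variable {𝕜}

theorem iteratedDirDeriv_append (L₁ L₂ : List E) (f : E → F) :
    iteratedDirDeriv 𝕜 (L₁ ++ L₂) f = iteratedDirDeriv 𝕜 L₁ (iteratedDirDeriv 𝕜 L₂ f) :=
  List.foldr_append

theorem iteratedDirDeriv_eq_iteratedFDeriv [CompleteSpace F] {f : E → F} :
    ∀ (L : List E) {x : E}, AnalyticAt 𝕜 f x →
      iteratedDirDeriv 𝕜 L f x = iteratedFDeriv 𝕜 L.length f x L.get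
  | [], _, _ => by simp [iteratedDirDeriv]
  | v :: L, x, hf => by
    have hloc : iteratedDirDeriv 𝕜 L f =ᶠ[nhds x] fun y => iteratedFDeriv 𝕜 L.length f y L.get :=
      hf.eventually_analyticAt.mono fun y hy => iteratedDirDeriv_eq_iteratedFDeriv L hy
    have hdiff : DifferentiableAt 𝕜 (iteratedFDeriv 𝕜 L.length f) x :=
      (hf.contDiffAt (n := ω)).differentiableAt_iteratedFDeriv (WithTop.coe_lt_top _)
    change fderiv 𝕜 (iteratedDirDeriv 𝕜 L f) x v = _
    rw [hloc.fderiv_eq, fderiv_continuousMultilinear_apply_const hdiff]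
    rfl

theorem norm_iteratedDirDeriv_le [CompleteSpace F] {f : E → F} {x : E} (hf : AnalyticAt 𝕜 f x)
    (L : List E) (hL : ∀ v ∈ L, ‖v‖ ≤ 1) :
    ‖iteratedDirDeriv 𝕜 L f x‖ ≤ ‖iteratedFDeriv 𝕜 L.length f x‖ := by
  rw [iteratedDirDeriv_eq_iteratedFDeriv L hf]
  refine (ContinuousMultilinearMap.le_opNorm _ _).trans (mul_le_of_le_one_right (norm_nonneg _) ?_)
  exact Finset.prod_le_one (fun _ _ => norm_nonneg _) fun i _ => hL _ (List.get_mem L i)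

end IteratedDirDeriv

section PartialDerivatives

variable {d : ℕ} {A : Type*} [NormedAddCommGroup A] [NormedSpace ℝ A]

theorem pd_iterate_eq_iteratedDirDeriv (j : Fin d) (k : ℕ) (f : EuclideanSpace ℝ (Fin d) → A) :
    (pd j)^[k] f = iteratedDirDeriv ℝ (List.replicate k (EuclideanSpace.single j 1)) f := by
  induction k with
  | zero => rfl
  | succ k ih => rw [Function.iterate_succ_apply', ih]; rfl

theorem mpd_eq_iteratedDirDeriv (α : Fin d → ℕ) (f : EuclideanSpace ℝ (Fin d) → A) :
    mpd α f = iteratedDirDeriv ℝ ((List.finRange d).flatMap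
      fun j => List.replicate (α j) (EuclideanSpace.single j 1)) f := by
  rw [mpd]
  induction List.finRange d with
  | nil => rfl
  | cons j js ih =>
    rw [List.foldr_cons, ih, List.flatMap_cons, iteratedDirDeriv_append,
      pd_iterate_eq_iteratedDirDeriv]

theorem norm_mpd_le_norm_iteratedFDeriv [CompleteSpace A] {f : EuclideanSpace ℝ (Fin d) → A}
    {y : EuclideanSpace ℝ (Fin d)} (hf : AnalyticAt ℝ f y) (α : Fin d → ℕ) :
    ‖mpd α f y‖ ≤ ‖iteratedFDeriv ℝ (∑ i, α i) f y‖ := by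
  have hlen : ((List.finRange d).flatMap
      fun j => List.replicate (α j) (EuclideanSpace.single j (1 : ℝ))).length = ∑ i, α i := by
    simp [List.length_flatMap, Fin.sum_univ_def]
  rw [mpd_eq_iteratedDirDeriv, ← hlen]
  refine norm_iteratedDirDeriv_le hf _ fun v hv => ?_
  obtain ⟨j, -, hj⟩ := List.mem_flatMap.1 hv
  simp [List.eq_of_mem_replicate hj]

end PartialDerivatives

theorem Nat.factorial_sum_le_card_pow_mul_prod {ι : Type*} [Fintype ι] (f : ι → ℕ) :
    (∑ i, f i)! ≤ Fintype.card ι ^ (∑ i, f i) * ∏ i, (f i)! := by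
  classical
  have hmult : Nat.multinomial Finset.univ f ≤ Fintype.card ι ^ (∑ i, f i) := by
    have := Finset.sum_pow_eq_sum_piAntidiag Finset.univ (fun _ : ι => (1 : ℕ)) (∑ i, f i)
    simp only [Finset.sum_const, Finset.card_univ, smul_eq_mul, mul_one, one_pow,
      Finset.prod_const_one] at this
    rw [this]
    exact Finset.single_le_sum (fun _ _ => Nat.zero_le _) (by simp)
  rw [← Nat.multinomial_spec, mul_comm]
  exact Nat.mul_le_mul_right _ hmult

section CauchyEstimate

variable {𝕜 E F : Type*} [NontriviallyNormedField 𝕜] [NormedAddCommGroup E]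
  [NormedSpace 𝕜 E] [NormedAddCommGroup F] [NormedSpace 𝕜 F] [CompleteSpace F]
  {f : E → F} {x : E}

theorem HasFPowerSeriesOnBall.norm_iteratedFDeriv_le {p : FormalMultilinearSeries 𝕜 E F}
    {r : ENNReal} (h : HasFPowerSeriesOnBall f p x r) (n : ℕ) :
    ‖iteratedFDeriv 𝕜 n f x‖ ≤ n ! * ‖p n‖ := by
  refine ContinuousMultilinearMap.opNorm_le_bound (by positivity) fun v => ?_
  rw [h.iteratedFDeriv_eq_sum_of_completeSpace]
  calc ‖∑ σ : Equiv.Perm (Fin n), p n (fun i => v (σ i))‖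
      ≤ ∑ σ : Equiv.Perm (Fin n), ‖p n‖ * ∏ i, ‖v (σ i)‖ :=
        norm_sum_le_of_le _ fun σ _ => (p n).le_opNorm _
    _ = ∑ σ : Equiv.Perm (Fin n), ‖p n‖ * ∏ i, ‖v i‖ :=
        Finset.sum_congr rfl fun σ _ => by rw [Equiv.prod_comp σ fun i => ‖v i‖]
    _ = n ! * ‖p n‖ * ∏ i, ‖v i‖ := by
        rw [Finset.sum_const, Finset.card_univ, Fintype.card_perm, Fintype.card_fin, nsmul_eq_mul,
          mul_assoc]

theorem AnalyticAt.exists_norm_iteratedFDeriv_le (hf : AnalyticAt 𝕜 f x) :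
    ∃ K > 0, ∀ n, ‖iteratedFDeriv 𝕜 n f x‖ ≤ K ^ (n + 1) * n ! := by
  obtain ⟨p, r, hp⟩ := hf
  obtain ⟨ρ, hρ0, hρr⟩ := ENNReal.lt_iff_exists_nnreal_btwn.1 hp.r_pos
  have hρ : (0 : ℝ) < ρ := ENNReal.coe_pos.1 hρ0
  obtain ⟨C, hC, hpC⟩ :=
    p.norm_le_div_pow_of_pos_of_lt_radius (ENNReal.coe_pos.1 hρ0) (hρr.trans_le hp.r_le)
  refine ⟨max C ρ⁻¹, lt_max_of_lt_left hC, fun n => ?_⟩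
  calc ‖iteratedFDeriv 𝕜 n f x‖ ≤ n ! * ‖p n‖ := hp.norm_iteratedFDeriv_le n
    _ ≤ n ! * (C * ρ⁻¹ ^ n) := by
        gcongr
        simpa [div_eq_mul_inv] using hpC n
    _ ≤ n ! * (max C ρ⁻¹ * max C ρ⁻¹ ^ n) := by gcongr <;> simp
    _ = max C ρ⁻¹ ^ (n + 1) * n ! := by ring

end CauchyEstimate

section Rescale

variable {𝕜 E F : Type*} [NontriviallyNormedField 𝕜] [NormedAddCommGroup E]
  [NormedSpace 𝕜 E] [NormedAddCommGroup F] [NormedSpace 𝕜 F]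

theorem norm_iteratedFDeriv_comp_const_smul (f : E → F) {c : 𝕜} (hc : c ≠ 0) (x : E) (n : ℕ) :
    ‖iteratedFDeriv 𝕜 n (fun y => f (c • y)) x‖ = ‖c‖ ^ n * ‖iteratedFDeriv 𝕜 n f (c • x)‖ := by
  let g : E ≃L[𝕜] E := ContinuousLinearEquiv.smulLeft (Units.mk0 c hc)
  have hcomp : iteratedFDeriv 𝕜 n (fun y => f (c • y)) x =
      c ^ n • iteratedFDeriv 𝕜 n f (c • x) := by
    have := g.iteratedFDerivWithin_comp_right f uniqueDiffOn_univ (Set.mem_univ (g x)) n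
    simp only [Set.preimage_univ, iteratedFDerivWithin_univ] at this
    ext v
    change iteratedFDeriv 𝕜 n (f ∘ g) x v = _
    rw [this]
    simp [g, ContinuousMultilinearMap.map_smul_univ]
  rw [hcomp, norm_smul, norm_pow]

end Rescale

section InvNorm

variable {E : Type*} [NormedAddCommGroup E] [InnerProductSpace ℝ E]

theorem analyticAt_inv_norm {x : E} (hx : x ≠ 0) : AnalyticAt ℝ (fun y : E => ‖y‖⁻¹) x := by
  have hsq : AnalyticAt ℝ (fun y : E => ‖y‖ ^ 2) x := by
    simp_rw [← real_inner_self_eq_norm_sq]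
    exact ((innerSL ℝ).analyticAt_bilinear (x, x)).comp (f := fun y : E => (y, y))
      (analyticAt_id.prod analyticAt_id)
  have hpos : 0 < ‖x‖ ^ 2 := by positivity
  have hlog : AnalyticAt ℝ (fun y : E => Real.log (‖y‖ ^ 2)) x :=
    (analyticAt_log hpos).comp (f := fun y : E => ‖y‖ ^ 2) hsq
  have hexp : AnalyticAt ℝ (fun y : E => Real.exp (Real.log (‖y‖ ^ 2) * -2⁻¹)) x :=
    (hlog.mul analyticAt_const).rexp'
  refine hexp.congr ?_
  filter_upwards [isOpen_ne.mem_nhds hx] with y hy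
  have : 0 < ‖y‖ := norm_pos_iff.2 hy
  rw [← Real.rpow_def_of_pos (by positivity), ← Real.rpow_natCast, ← Real.rpow_mul this.le]
  norm_num [Real.rpow_neg_one]

theorem norm_iteratedFDeriv_inv_norm_smul {c : ℝ} (hc : 0 < c) {x : E} (hx : x ≠ 0) (n : ℕ) :
    ‖iteratedFDeriv ℝ n (fun y : E => ‖y‖⁻¹) (c • x)‖ =
      ‖iteratedFDeriv ℝ n (fun y : E => ‖y‖⁻¹) x‖ / c ^ (n + 1) := by
  have hhom : (fun y : E => ‖c • y‖⁻¹) = fun y => c⁻¹ • ‖y‖⁻¹ := by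
    ext y
    rw [norm_smul, Real.norm_of_nonneg hc.le, mul_inv, smul_eq_mul]
  have h := norm_iteratedFDeriv_comp_const_smul (fun y : E => ‖y‖⁻¹) hc.ne' x n
  rw [hhom, iteratedFDeriv_const_smul_apply' (analyticAt_inv_norm hx).contDiffAt, norm_smul,
    Real.norm_of_nonneg hc.le, Real.norm_of_nonneg (inv_nonneg.2 hc.le)] at h
  have hscale : ‖iteratedFDeriv ℝ n (fun y : E => ‖y‖⁻¹) x‖ =
      c ^ (n + 1) * ‖iteratedFDeriv ℝ n (fun y : E => ‖y‖⁻¹) (c • x)‖ := by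
    rw [pow_succ', mul_assoc, ← h, mul_inv_cancel_left₀ hc.ne']
  rw [hscale, mul_div_cancel_left₀ _ (by positivity)]

theorem norm_iteratedFDeriv_inv_norm_congr {x y : E} (h : ‖x‖ = ‖y‖) (n : ℕ) :
    ‖iteratedFDeriv ℝ n (fun z : E => ‖z‖⁻¹) x‖ = ‖iteratedFDeriv ℝ n (fun z : E => ‖z‖⁻¹) y‖ := by
  let R := Submodule.reflection (ℝ ∙ (x - y))ᗮ
  have hR : (fun z : E => ‖z‖⁻¹) ∘ R = fun z => ‖z‖⁻¹ := by
    ext z; simp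
  rw [← Submodule.reflection_sub h, ← R.norm_iteratedFDeriv_comp_right, hR]

theorem exists_norm_iteratedFDeriv_inv_norm_le :
    ∃ K > 0, ∀ (n : ℕ) (y : E), y ≠ 0 →
      ‖iteratedFDeriv ℝ n (fun z : E => ‖z‖⁻¹) y‖ ≤ K ^ (n + 1) * n ! / ‖y‖ ^ (n + 1) := by
  rcases subsingleton_or_nontrivial E with hE | hE
  · exact ⟨1, one_pos, fun n y hy => absurd (Subsingleton.elim y 0) hy⟩
  obtain ⟨u, hu⟩ := exists_norm_eq E zero_le_one
  obtain ⟨K, hK, hbound⟩ :=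
    (analyticAt_inv_norm (norm_ne_zero_iff.1 (hu ▸ one_ne_zero))).exists_norm_iteratedFDeriv_le
  refine ⟨K, hK, fun n y hy => ?_⟩
  have hy' : 0 < ‖y‖ := norm_pos_iff.2 hy
  have hunit : ‖‖y‖⁻¹ • y‖ = ‖u‖ := by
    rw [hu, norm_smul, norm_inv, norm_norm, inv_mul_cancel₀ hy'.ne']
  calc ‖iteratedFDeriv ℝ n (fun z : E => ‖z‖⁻¹) y‖
      = ‖iteratedFDeriv ℝ n (fun z : E => ‖z‖⁻¹) (‖y‖ • ‖y‖⁻¹ • y)‖ := by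
        rw [smul_inv_smul₀ hy'.ne']
    _ = ‖iteratedFDeriv ℝ n (fun z : E => ‖z‖⁻¹) u‖ / ‖y‖ ^ (n + 1) := by
        rw [norm_iteratedFDeriv_inv_norm_smul hy' (by simpa [hy'.ne'] using hy),
          norm_iteratedFDeriv_inv_norm_congr hunit]
    _ ≤ K ^ (n + 1) * n ! / ‖y‖ ^ (n + 1) := by gcongr; exact hbound n

end InvNorm

theorem stmt_1_general (d : ℕ) :
    ∃ K > (0 : ℝ), ∀ (α : Fin d → ℕ) (y : EuclideanSpace ℝ (Fin d)), y ≠ 0 →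
      |mpd α (fun t => ‖t‖⁻¹) y| ≤
        K ^ (∑ i, α i + 1) * (∏ i, ((α i)! : ℝ)) * ‖y‖ ^ (-(∑ i, α i : ℤ) - 1) := by
  obtain ⟨K, hK, hbound⟩ := exists_norm_iteratedFDeriv_inv_norm_le (E := EuclideanSpace ℝ (Fin d))
  refine ⟨K * (d + 1), by positivity, fun α y hy => ?_⟩
  set n := ∑ i, α i
  have hfac : (n ! : ℝ) ≤ d ^ n * ∏ i, ((α i)! : ℝ) := by
    exact_mod_cast (Fintype.card_fin d ▸ Nat.factorial_sum_le_card_pow_mul_prod α)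
  have hd : (d : ℝ) ^ n ≤ (d + 1) ^ (n + 1) :=
    (pow_le_pow_left₀ d.cast_nonneg (by linarith) n).trans
      (pow_le_pow_right₀ (by linarith [(d.cast_nonneg : (0 : ℝ) ≤ d)]) n.le_succ)
  have hzpow : ‖y‖ ^ (-(∑ i, α i : ℤ) - 1) = (‖y‖ ^ (n + 1))⁻¹ := by
    rw [← zpow_natCast, ← zpow_neg]; push_cast [n]; ring_nf
  rw [← Real.norm_eq_abs, hzpow]
  calc ‖mpd α (fun t => ‖t‖⁻¹) y‖ ≤ ‖iteratedFDeriv ℝ n (fun t => ‖t‖⁻¹) y‖ :=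
        norm_mpd_le_norm_iteratedFDeriv (analyticAt_inv_norm hy) α
    _ ≤ K ^ (n + 1) * n ! / ‖y‖ ^ (n + 1) := hbound n y hy
    _ ≤ K ^ (n + 1) * (d ^ n * ∏ i, ((α i)! : ℝ)) / ‖y‖ ^ (n + 1) := by gcongr
    _ ≤ K ^ (n + 1) * ((d + 1) ^ (n + 1) * ∏ i, ((α i)! : ℝ)) / ‖y‖ ^ (n + 1) := by gcongr
    _ = (K * (d + 1)) ^ (n + 1) * (∏ i, ((α i)! : ℝ)) * (‖y‖ ^ (n + 1))⁻¹ := by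
        rw [mul_pow]; ring

/-- For every dimension `d ≥ 1` there exists `K > 0` such that for every multi-index `α`
and every `y ≠ 0`, `|∂^α(|·|⁻¹)(y)| ≤ K^(|α|+1) · α! · |y|^(-|α|-1)`. -/
theorem stmt_1 (d : ℕ) (hd : 1 ≤ d) :
    ∃ K > (0 : ℝ), ∀ (α : Fin d → ℕ) (y : EuclideanSpace ℝ (Fin d)), y ≠ 0 →
      |mpd α (fun t => ‖t‖⁻¹) y| ≤
        K ^ (∑ i, α i + 1) * (∏ i, ((α i)! : ℝ)) * ‖y‖ ^ (-(∑ i, α i : ℤ) - 1) :=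
  stmt_1_general d
end

section
/- For every dimension d ≥ 1 and every multi-index α ∈ ℕ^d there exists a constant C > 0 such that for all y ∈ ℝ^d ∖ {0}, |∂^α(|·|^{-1})(y)| ≤ C · (α!) · |y|^{-|α|-1}. -/
open scoped Nat

section aux
variable {d : ℕ}

local notation "E" => EuclideanSpace ℝ (Fin d)

def Nice (g : E → ℝ) (k : ℤ) : Prop :=
  ContDiffOn ℝ (⊤ : ℕ∞) g {y : E | y ≠ 0} ∧
    ∀ c : ℝ, 0 < c → ∀ y : E, y ≠ 0 → g (c • y) = c ^ k * g y

lemma isOpen_U : IsOpen {y : E | y ≠ 0} := by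
  have : {y : E | y ≠ 0} = {(0:E)}ᶜ := by ext y; simp
  rw [this]; exact isOpen_compl_singleton

lemma nice_step (j : Fin d) (g : E → ℝ) (k : ℤ) (hg : Nice g k) :
    Nice (pd j g) (k - 1) := by
  obtain ⟨hsm, hhom⟩ := hg
  have hder : ContDiffOn ℝ (⊤ : ℕ∞) (fun y => fderiv ℝ g y) {y : E | y ≠ 0} :=
    hsm.fderiv_of_isOpen isOpen_U (by simp)
  constructor
  · exact hder.clm_apply contDiffOn_const
  · intro c hc y hy
    have hcy : c • y ≠ 0 := smul_ne_zero (ne_of_gt hc) hy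
    have hdy : DifferentiableAt ℝ g y :=
      (hsm.contDiffAt (isOpen_U.mem_nhds hy)).differentiableAt (by simp)
    have hdcy : DifferentiableAt ℝ g (c • y) :=
      (hsm.contDiffAt (isOpen_U.mem_nhds hcy)).differentiableAt (by simp)
    -- chain rule: fderiv (fun x => g (c • x)) y = c • fderiv g (c • y)
    have hlin : HasFDerivAt (fun x : E => c • x) (c • ContinuousLinearMap.id ℝ E) y := by
      exact (hasFDerivAt_id y).const_smul c
    have h1 : HasFDerivAt (fun x : E => g (c • x))
        ((fderiv ℝ g (c • y)).comp (c • ContinuousLinearMap.id ℝ E)) y :=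
      (hdcy.hasFDerivAt).comp y hlin
    -- eventual equality: fun x => g (c • x) = fun x => c ^ k * g x near y
    have hev : (fun x : E => g (c • x)) =ᶠ[nhds y] fun x => c ^ k * g x := by
      filter_upwards [isOpen_U.mem_nhds hy] with x hx
      exact hhom c hc x hx
    have h2 : HasFDerivAt (fun x : E => c ^ k * g x) (c ^ k • fderiv ℝ g y) y :=
      (hdy.hasFDerivAt).const_smul (c ^ k)
    have h3 : HasFDerivAt (fun x : E => g (c • x)) (c ^ k • fderiv ℝ g y) y :=
      h2.congr_of_eventuallyEq hev
    have heq : (fderiv ℝ g (c • y)).comp (c • ContinuousLinearMap.id ℝ E)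
        = c ^ k • fderiv ℝ g y := h1.unique h3
    have := congrArg (fun L : E →L[ℝ] ℝ => L (EuclideanSpace.single j 1)) heq
    simp only [ContinuousLinearMap.comp_apply, ContinuousLinearMap.smul_apply,
      ContinuousLinearMap.coe_smul', Pi.smul_apply, ContinuousLinearMap.id_apply,
      map_smul, smul_eq_mul] at this
    have hc' : c ≠ 0 := ne_of_gt hc
    unfold pd
    rw [zpow_sub₀ hc', zpow_one]
    field_simp at this ⊢
    linarith [this]

lemma nice_iter (j : Fin d) (n : ℕ) (g : E → ℝ) (k : ℤ) (hg : Nice g k) :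
    Nice ((pd j)^[n] g) (k - n) := by
  induction n generalizing g k with
  | zero => simpa using hg
  | succ m ih =>
      rw [Function.iterate_succ_apply]
      have h := ih (pd j g) (k - 1) (nice_step j g k hg)
      have e : k - ((m+1 : ℕ) : ℤ) = k - 1 - m := by push_cast; ring
      rw [e]; exact h

lemma nice_foldr (α : Fin d → ℕ) (l : List (Fin d)) (g : E → ℝ) (k : ℤ) (hg : Nice g k) :
    Nice (l.foldr (fun j g => (pd j)^[α j] g) g) (k - ((l.map α).sum : ℤ)) := by
  induction l generalizing g k with
  | nil => simpa using hg
  | cons j t ih =>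
      simp only [List.foldr_cons]
      have h := nice_iter j (α j) _ _ (ih g k hg)
      have e : k - (((List.map α (j :: t)).sum : ℕ) : ℤ)
          = k - ((List.map α t).sum : ℤ) - (α j : ℤ) := by simp; push_cast; ring
      rw [e]; exact h


lemma nice_base : Nice (fun t : E => ‖t‖⁻¹) (-1) := by
  constructor
  · intro y hy
    have h1 : ContDiffAt ℝ (⊤ : ℕ∞) (fun t : E => ‖t‖) y := contDiffAt_norm ℝ hy
    exact (h1.inv (norm_ne_zero_iff.2 hy)).contDiffWithinAt
  · intro c hc y hy
    simp only [norm_smul, Real.norm_of_nonneg hc.le, mul_inv, zpow_neg_one]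

end aux

/-- For every dimension `d ≥ 1` and every multi-index `α` there is `C > 0` such that
for all `y ≠ 0`, `|∂^α(|·|⁻¹)(y)| ≤ C · α! · |y|^(-|α|-1)`. -/
theorem stmt_2 (d : ℕ) (hd : 1 ≤ d) (α : Fin d → ℕ) :
    ∃ C > (0 : ℝ), ∀ y : EuclideanSpace ℝ (Fin d), y ≠ 0 →
      |mpd α (fun t => ‖t‖⁻¹) y| ≤
        C * (∏ i, ((α i)! : ℝ)) * ‖y‖ ^ (-(∑ i, α i : ℤ) - 1) := by
  set E' := EuclideanSpace ℝ (Fin d)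
  set k : ℤ := -1 - (((List.finRange d).map α).sum : ℤ) with hk
  have hnice : Nice (mpd α (fun t : E' => ‖t‖⁻¹)) k :=
    nice_foldr α (List.finRange d) _ (-1) nice_base
  obtain ⟨hsm, hhom⟩ := hnice
  set g := mpd α (fun t : E' => ‖t‖⁻¹) with hg
  have hsub : Metric.sphere (0:E') 1 ⊆ {y : E' | y ≠ 0} := by
    intro x hx
    rw [mem_sphere_zero_iff_norm] at hx
    intro h; rw [h] at hx; simp at hx
  obtain ⟨M, hM⟩ := (isCompact_sphere (0:E') 1).exists_bound_of_continuousOn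
    (hsm.continuousOn.mono hsub)
  have hkeq : k = -(∑ i, α i : ℤ) - 1 := by
    rw [hk, Fin.sum_univ_def]; push_cast [List.map_map]; simp only [Function.comp_def]; ring
  refine ⟨max M 1, lt_of_lt_of_le one_pos (le_max_right _ _), ?_⟩
  intro y hy
  have hc : (0:ℝ) < ‖y‖ := norm_pos_iff.2 hy
  set u : E' := ‖y‖⁻¹ • y with hu
  have hu1 : ‖u‖ = 1 := by
    rw [hu, norm_smul, Real.norm_of_nonneg (inv_nonneg.2 hc.le), inv_mul_cancel₀ hc.ne']
  have hune : u ≠ 0 := by intro h; rw [h] at hu1; simp at hu1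
  have hyu : y = ‖y‖ • u := by rw [hu, smul_smul, mul_inv_cancel₀ hc.ne', one_smul]
  have hgy : g y = ‖y‖ ^ k * g u := by
    conv_lhs => rw [hyu]
    exact hhom ‖y‖ hc u hune
  have hzp : (0:ℝ) < ‖y‖ ^ k := zpow_pos hc k
  have hMu : |g u| ≤ M := by
    have := hM u (by rw [mem_sphere_zero_iff_norm]; exact hu1)
    simpa using this
  have hP : (1:ℝ) ≤ ∏ i, ((α i)! : ℝ) := by
    have := Finset.prod_le_prod (s := Finset.univ) (f := fun _ : Fin d => (1:ℝ))
      (g := fun i => ((α i)! : ℝ)) (fun i _ => zero_le_one)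
      (fun i _ => by simpa using (Nat.one_le_cast (α := ℝ)).mpr (Nat.factorial_pos (α i)))
    simpa using this
  calc |g y| = ‖y‖ ^ k * |g u| := by rw [hgy, abs_mul, abs_of_pos hzp]
    _ ≤ ‖y‖ ^ k * M := by exact mul_le_mul_of_nonneg_left hMu hzp.le
    _ ≤ max M 1 * (∏ i, ((α i)! : ℝ)) * ‖y‖ ^ k := by
        rw [mul_comm]
        apply mul_le_mul_of_nonneg_right _ hzp.le
        calc M ≤ max M 1 := le_max_left _ _
          _ = max M 1 * 1 := (mul_one _).symm
          _ ≤ max M 1 * (∏ i, ((α i)! : ℝ)) :=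
              mul_le_mul_of_nonneg_left hP (le_trans one_pos.le (le_max_right _ _))
    _ = max M 1 * (∏ i, ((α i)! : ℝ)) * ‖y‖ ^ (-(∑ i, α i : ℤ) - 1) := by rw [hkeq]
end

section
/- Let d ≥ 1. For every y ∈ ℝ^d with |y| = 1 (Euclidean norm) and every multi-index α ∈ ℕ^d, the partial derivatives of the function u(t) = |t|^{-1} satisfy |∂^α(|·|^{-1})(y)| ≤ (4√d)^{|α|+1} · (α!). -/
/-!
`‖x‖⁻¹` is the restriction to real points of `F z = (∑ zᵢ²)^(-1/2)`, which is holomorphic where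
`Re ∑ zᵢ² > 0`, and real partial derivatives of the restriction are real parts of complex
partial derivatives of `F`. On the polydisc of radius `r = 1/(4√d)` around a unit vector `y`,
`|∑ zᵢ² - 1| ≤ 2r ∑ |yᵢ| + d r² ≤ 9/16`, so `|F| ≤ 2` there, and Cauchy's estimate applied in
one variable at a time gives `|∂^α F(y)| ≤ 2 α! r^(-|α|) ≤ (4√d)^(|α|+1) α!`.
-/

open scoped Nat

open Metric Function Filter Topology

noncomputable section

section ComplexPartial

variable {ι : Type*} [Fintype ι] [DecidableEq ι]

def complexPartial (j : ι) (F : (ι → ℂ) → ℂ) : (ι → ℂ) → ℂ :=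
  fun z => fderiv ℂ F z (Pi.single j 1)

variable {U : Set (ι → ℂ)} {F : (ι → ℂ) → ℂ}

theorem AnalyticOnNhd.complexPartial (hF : AnalyticOnNhd ℂ F U) (j : ι) :
    AnalyticOnNhd ℂ (_root_.complexPartial j F) U :=
  (ContinuousLinearMap.apply ℂ ℂ (Pi.single j 1 : ι → ℂ)).comp_analyticOnNhd hF.fderiv

theorem AnalyticOnNhd.iterate_complexPartial (hF : AnalyticOnNhd ℂ F U) (j : ι) (m : ℕ) :
    AnalyticOnNhd ℂ ((_root_.complexPartial j)^[m] F) U := by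
  induction m with
  | zero => exact hF
  | succ m ih => rw [iterate_succ_apply']; exact ih.complexPartial j

theorem AnalyticOnNhd.foldr_complexPartial (hF : AnalyticOnNhd ℂ F U) (α : ι → ℕ) (l : List ι) :
    AnalyticOnNhd ℂ (l.foldr (fun j H => (_root_.complexPartial j)^[α j] H) F) U := by
  induction l with
  | nil => exact hF
  | cons j l ih => exact ih.iterate_complexPartial j (α j)

theorem hasDerivAt_comp_update {z : ι → ℂ} {j : ι} {w : ℂ}
    (hF : DifferentiableAt ℂ F (update z j w)) :
    HasDerivAt (fun v => F (update z j v)) (complexPartial j F (update z j w)) w :=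
  hF.hasFDerivAt.comp_hasDerivAt w (hasDerivAt_update z j w)

theorem iterate_complexPartial_eq_iteratedDeriv (hU : IsOpen U) (hF : AnalyticOnNhd ℂ F U)
    (j : ι) (m : ℕ) {z : ι → ℂ} (hz : z ∈ U) :
    (complexPartial j)^[m] F z = iteratedDeriv m (fun w => F (update z j w)) (z j) := by
  rw [iteratedDeriv_eq_iterate]
  induction m generalizing z with
  | zero => simp
  | succ m ih =>
    have hslice : ∀ᶠ w in 𝓝 (z j), update z j w ∈ U :=
      (continuous_const.update j continuous_id).continuousAt.preimage_mem_nhds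
        (by simpa using hU.mem_nhds hz : U ∈ 𝓝 (update z j (z j)))
    have heq : (fun w => (complexPartial j)^[m] F (update z j w))
        =ᶠ[𝓝 (z j)] deriv^[m] (fun w => F (update z j w)) := by
      filter_upwards [hslice] with w hw
      simpa using ih hw
    have hdiff : DifferentiableAt ℂ ((complexPartial j)^[m] F) (update z j (z j)) := by
      rw [update_eq_self]; exact (hF.iterate_complexPartial j m z hz).differentiableAt
    rw [iterate_succ_apply', iterate_succ_apply', ← heq.deriv_eq,
      (hasDerivAt_comp_update hdiff).deriv, update_eq_self]

-- `closedBall c r` is the polydisc of radius `r`, since `ι → ℂ` carries the sup norm.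
theorem norm_foldr_complexPartial_le (hU : IsOpen U) (hF : AnalyticOnNhd ℂ F U)
    {c : ι → ℂ} {r M : ℝ} (hr : 0 < r) (hcU : closedBall c r ⊆ U)
    (hM : ∀ z ∈ closedBall c r, ‖F z‖ ≤ M) (α : ι → ℕ) {l : List ι} (hl : l.Nodup)
    {z : ι → ℂ} (hz : z ∈ closedBall c r) (hzc : ∀ i ∈ l, z i = c i) :
    ‖l.foldr (fun j H => (complexPartial j)^[α j] H) F z‖
      ≤ M * (l.map fun i => ((α i)! : ℝ) / r ^ α i).prod := by
  induction l generalizing z with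
  | nil => simpa using hM z hz
  | cons j l ih =>
    obtain ⟨hjl, hl⟩ := List.nodup_cons.mp hl
    set H := l.foldr (fun j H => (complexPartial j)^[α j] H) F
    have hslice : ∀ w ∈ closedBall (c j) r, update z j w ∈ closedBall c r := by
      rw [closedBall_pi _ hr.le] at hz ⊢
      exact fun w hw => (Set.update_mem_pi_iff_of_mem hz).mpr fun _ => hw
    have hH : ∀ w ∈ closedBall (c j) r,
        ‖H (update z j w)‖ ≤ M * (l.map fun i => ((α i)! : ℝ) / r ^ α i).prod :=
      fun w hw => ih hl (hslice w hw) fun i hi => by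
        rw [update_of_ne (ne_of_mem_of_not_mem hi hjl)]
        exact hzc i (List.mem_cons_of_mem j hi)
    have hdiff : DifferentiableOn ℂ (fun w => H (update z j w)) (closedBall (c j) r) :=
      fun w hw => (hasDerivAt_comp_update ((hF.foldr_complexPartial α l) _
        (hcU (hslice w hw))).differentiableAt).differentiableAt.differentiableWithinAt
    rw [List.foldr_cons, iterate_complexPartial_eq_iteratedDeriv hU (hF.foldr_complexPartial α l)
      j (α j) (hcU hz), hzc j List.mem_cons_self]
    calc _ ≤ (α j)! * (M * (l.map fun i => ((α i)! : ℝ) / r ^ α i).prod) / r ^ α j :=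
          Complex.norm_iteratedDeriv_le_of_forall_mem_sphere_norm_le (α j) hr
            (hdiff.diffContOnCl_ball subset_rfl) fun w hw => hH w (sphere_subset_closedBall hw)
      _ = _ := by rw [List.map_cons, List.prod_cons]; ring

end ComplexPartial

section RealPartial

variable {d : ℕ}

def toComplexPi (d : ℕ) : EuclideanSpace ℝ (Fin d) →L[ℝ] (Fin d → ℂ) :=
  ContinuousLinearMap.pi fun j => Complex.ofRealCLM.comp (EuclideanSpace.proj j)

@[simp]
theorem toComplexPi_apply (x : EuclideanSpace ℝ (Fin d)) (j : Fin d) :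
    toComplexPi d x j = x j :=
  rfl

theorem toComplexPi_single (j : Fin d) :
    toComplexPi d (EuclideanSpace.single j 1) = Pi.single j 1 := by
  ext i
  rcases eq_or_ne i j with rfl | h
  · simp
  · simp [h]

theorem pd_re_comp_toComplexPi {H : (Fin d → ℂ) → ℂ} {x : EuclideanSpace ℝ (Fin d)}
    (hH : DifferentiableAt ℂ H (toComplexPi d x)) (j : Fin d) :
    pd j (fun t => (H (toComplexPi d t)).re) x = (complexPartial j H (toComplexPi d x)).re := by
  have h : HasFDerivAt (fun t => (H (toComplexPi d t)).re) _ x := Complex.reCLM.hasFDerivAt.comp x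
    ((hH.hasFDerivAt.restrictScalars ℝ).comp x (toComplexPi d).hasFDerivAt)
  rw [pd, h.fderiv]
  simp [complexPartial, toComplexPi_single]

variable {U : Set (Fin d → ℂ)} {H : (Fin d → ℂ) → ℂ} {g : EuclideanSpace ℝ (Fin d) → ℝ}

theorem iterate_pd_eq_re_iterate_complexPartial (hU : IsOpen U) (hH : AnalyticOnNhd ℂ H U)
    (hg : ∀ x, toComplexPi d x ∈ U → g x = (H (toComplexPi d x)).re) (j : Fin d) (m : ℕ)
    {x : EuclideanSpace ℝ (Fin d)} (hx : toComplexPi d x ∈ U) :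
    (pd j)^[m] g x = ((complexPartial j)^[m] H (toComplexPi d x)).re := by
  induction m generalizing x with
  | zero => exact hg x hx
  | succ m ih =>
    have heq : (pd j)^[m] g =ᶠ[𝓝 x] fun t => ((complexPartial j)^[m] H (toComplexPi d t)).re := by
      filter_upwards [(hU.preimage (toComplexPi d).continuous).mem_nhds hx] with t ht
      exact ih ht
    rw [iterate_succ_apply', iterate_succ_apply', ← pd_re_comp_toComplexPi
      ((hH.iterate_complexPartial j m _ hx).differentiableAt)]
    simp only [pd, heq.fderiv_eq]

theorem foldr_pd_eq_re_foldr_complexPartial (hU : IsOpen U) (hH : AnalyticOnNhd ℂ H U)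
    (hg : ∀ x, toComplexPi d x ∈ U → g x = (H (toComplexPi d x)).re) (α : Fin d → ℕ)
    (l : List (Fin d)) {x : EuclideanSpace ℝ (Fin d)} (hx : toComplexPi d x ∈ U) :
    l.foldr (fun j g => (pd j)^[α j] g) g x
      = (l.foldr (fun j H => (complexPartial j)^[α j] H) H (toComplexPi d x)).re := by
  induction l generalizing x with
  | nil => exact hg x hx
  | cons j l ih =>
    exact iterate_pd_eq_re_iterate_complexPartial hU (hH.foldr_complexPartial α l)
      (fun _ => ih) j (α j) hx

end RealPartial

section InvNorm

variable {ι : Type*} [Fintype ι]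

def sumSq (z : ι → ℂ) : ℂ := ∑ i, z i ^ 2

def complexInvNorm (z : ι → ℂ) : ℂ := sumSq z ^ (-(1 / 2) : ℂ)

theorem isOpen_setOf_sumSq_re_pos : IsOpen {z : ι → ℂ | 0 < (sumSq z).re} :=
  isOpen_lt continuous_const
    (Complex.continuous_re.comp (continuous_finsetSum _ fun i _ => (continuous_apply i).pow 2))

theorem analyticOnNhd_complexInvNorm :
    AnalyticOnNhd ℂ complexInvNorm {z : ι → ℂ | 0 < (sumSq z).re} := fun z hz =>
  (Finset.analyticAt_fun_sum _ fun i _ =>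
    ((ContinuousLinearMap.proj i : (ι → ℂ) →L[ℂ] ℂ).analyticAt z).pow 2).cpow
    analyticAt_const (Or.inl hz)

theorem sumSq_toComplexPi {d : ℕ} (x : EuclideanSpace ℝ (Fin d)) :
    sumSq (toComplexPi d x) = ((‖x‖ ^ 2 : ℝ) : ℂ) := by
  simp [sumSq, EuclideanSpace.real_norm_sq_eq]

-- At `x = 0` both sides are junk values `0`.
theorem re_complexInvNorm_toComplexPi {d : ℕ} (x : EuclideanSpace ℝ (Fin d)) :
    (complexInvNorm (toComplexPi d x)).re = ‖x‖⁻¹ := by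
  rw [complexInvNorm, sumSq_toComplexPi, show (-(1 / 2) : ℂ) = ((-(1 / 2) : ℝ) : ℂ) by simp,
    ← Complex.ofReal_cpow (by positivity), Complex.ofReal_re, ← Real.rpow_natCast,
    ← Real.rpow_mul (norm_nonneg x)]
  norm_num [Real.rpow_neg_one]

theorem norm_sumSq_sub_sumSq_le {z w : ι → ℂ} {r : ℝ} (hz : z ∈ closedBall w r) :
    ‖sumSq z - sumSq w‖ ≤ r * (2 * ∑ i, ‖w i‖ + Fintype.card ι * r) := by
  have hr : 0 ≤ r := nonempty_closedBall.mp ⟨z, hz⟩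
  have hzi : ∀ i, ‖z i - w i‖ ≤ r := fun i => by
    simpa [dist_eq_norm] using (dist_le_pi_dist z w i).trans (mem_closedBall.mp hz)
  calc ‖sumSq z - sumSq w‖ = ‖∑ i, (z i - w i) * ((z i - w i) + 2 * w i)‖ := by
        simp only [sumSq, ← Finset.sum_sub_distrib]
        exact congrArg _ (Finset.sum_congr rfl fun i _ => by ring)
    _ ≤ ∑ i, r * (r + 2 * ‖w i‖) := by
        refine (norm_sum_le _ _).trans (Finset.sum_le_sum fun i _ => ?_)
        rw [norm_mul]
        refine mul_le_mul (hzi i) ((norm_add_le _ _).trans ?_) (norm_nonneg _) hr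
        simpa using hzi i
    _ = r * (2 * ∑ i, ‖w i‖ + Fintype.card ι * r) := by
        simp only [mul_add, Finset.sum_add_distrib, ← Finset.mul_sum, Finset.sum_const,
          Finset.card_univ, nsmul_eq_mul]
        ring

theorem sum_abs_le_sqrt_card_mul_norm {d : ℕ} (y : EuclideanSpace ℝ (Fin d)) :
    ∑ i, |y i| ≤ √d * ‖y‖ := by
  have h : (∑ i, |y i|) ^ 2 ≤ (√d * ‖y‖) ^ 2 := by
    rw [mul_pow, Real.sq_sqrt (Nat.cast_nonneg d), EuclideanSpace.real_norm_sq_eq]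
    simpa [sq_abs] using sq_sum_le_card_mul_sum_sq (s := Finset.univ) (f := fun i => |y i|)
  exact (pow_le_pow_iff_left₀ (by positivity) (by positivity) two_ne_zero).mp h

theorem norm_sumSq_sub_one_le {d : ℕ} (hd : 0 < d) {y : EuclideanSpace ℝ (Fin d)} (hy : ‖y‖ = 1)
    {z : Fin d → ℂ} (hz : z ∈ closedBall (toComplexPi d y) (4 * √d)⁻¹) :
    ‖sumSq z - 1‖ ≤ 9 / 16 := by
  have hsd : 0 < √(d : ℝ) := Real.sqrt_pos.mpr (by exact_mod_cast hd)
  have h := norm_sumSq_sub_sumSq_le hz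
  rw [sumSq_toComplexPi, hy] at h
  simp only [toComplexPi_apply, Complex.norm_real, Real.norm_eq_abs, Fintype.card_fin] at h
  calc ‖sumSq z - 1‖ ≤ (4 * √d)⁻¹ * (2 * ∑ i, |y i| + d * (4 * √d)⁻¹) := by simpa using h
    _ ≤ (4 * √d)⁻¹ * (2 * √d + d * (4 * √d)⁻¹) := by
        gcongr (4 * √d)⁻¹ * (2 * ?_ + _); simpa [hy] using sum_abs_le_sqrt_card_mul_norm y
    _ = 9 / 16 := by
        field_simp
        rw [Real.sq_sqrt (Nat.cast_nonneg d)]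
        ring

theorem norm_cpow_neg_half_le_two {q : ℂ} (hq : ‖q - 1‖ ≤ 3 / 4) : ‖q ^ (-(1 / 2) : ℂ)‖ ≤ 2 := by
  have hq' : 1 / 4 ≤ ‖q‖ := by
    have := norm_sub_norm_le (1 : ℂ) (1 - q)
    rw [sub_sub_cancel, norm_one, norm_sub_rev] at this
    linarith
  rw [show (-(1 / 2) : ℂ) = ((-(1 / 2) : ℝ) : ℂ) by simp, Complex.norm_cpow_real]
  calc ‖q‖ ^ (-(1 / 2) : ℝ) ≤ (1 / 4 : ℝ) ^ (-(1 / 2) : ℝ) :=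
        Real.rpow_le_rpow_of_nonpos (by norm_num) hq' (by norm_num)
    _ = 2 := by
        rw [Real.rpow_neg (by norm_num), ← Real.sqrt_eq_rpow,
          show (1 / 4 : ℝ) = (1 / 2) ^ 2 by norm_num, Real.sqrt_sq (by norm_num)]
        norm_num

theorem re_pos_of_norm_sub_one_lt {q : ℂ} (hq : ‖q - 1‖ < 1) : 0 < q.re := by
  have := (abs_le.mp (Complex.abs_re_le_norm (q - 1))).1
  simp only [Complex.sub_re, Complex.one_re] at this
  linarith

end InvNorm

end

/-- For `|y| = 1` and every multi-index `α`, `|∂^α(|·|⁻¹)(y)| ≤ (4√d)^(|α|+1) · α!`. -/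
theorem stmt_6 (d : ℕ) (hd : 1 ≤ d) (y : EuclideanSpace ℝ (Fin d)) (hy : ‖y‖ = 1)
    (α : Fin d → ℕ) :
    |mpd α (fun t => ‖t‖⁻¹) y| ≤
      (4 * Real.sqrt d) ^ (∑ i, α i + 1) * ∏ i, ((α i)! : ℝ) := by
  have hsd : 1 ≤ √(d : ℝ) := Real.one_le_sqrt.mpr (by exact_mod_cast hd)
  have hr : 0 < (4 * √(d : ℝ))⁻¹ := by positivity
  have hy₀ := mem_closedBall_self (x := toComplexPi d y) hr.le
  have hball : closedBall (toComplexPi d y) (4 * √d)⁻¹ ⊆ {z | 0 < (sumSq z).re} := fun z hz =>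
    re_pos_of_norm_sub_one_lt ((norm_sumSq_sub_one_le hd hy hz).trans_lt (by norm_num))
  have hbound : ∀ z ∈ closedBall (toComplexPi d y) (4 * √d)⁻¹, ‖complexInvNorm z‖ ≤ 2 :=
    fun z hz => norm_cpow_neg_half_le_two ((norm_sumSq_sub_one_le hd hy hz).trans (by norm_num))
  have hcauchy := norm_foldr_complexPartial_le isOpen_setOf_sumSq_re_pos
    analyticOnNhd_complexInvNorm hr hball hbound α (List.nodup_finRange d) hy₀ fun _ _ => rfl
  rw [mpd, foldr_pd_eq_re_foldr_complexPartial isOpen_setOf_sumSq_re_pos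
    analyticOnNhd_complexInvNorm (fun x _ => (re_complexInvNorm_toComplexPi x).symm) α _
    (hball hy₀), pow_succ]
  calc _ ≤ _ := (Complex.abs_re_le_norm _).trans hcauchy
    _ = 2 * ((4 * √d) ^ (∑ i, α i) * ∏ i, ((α i)! : ℝ)) := by
        rw [← Fin.prod_univ_def]
        simp only [div_eq_mul_inv, ← inv_pow, inv_inv, Finset.prod_mul_distrib,
          Finset.prod_pow_eq_pow_sum]
        ring
    _ ≤ _ := by
        rw [mul_comm _ (4 * √d), mul_assoc]
        gcongr
        linarith
end

section
/- Let n ≥ 1 and let g : ℝ^n → ℝ^n be a smooth (C^∞) map such that ‖(Dg)(s) − I‖ ≤ 1/2 for all s ∈ ℝ^n, where Dg is the total derivative, I is the identity on ℝ^n and ‖·‖ is the operator norm. Then g is a bijection of ℝ^n onto ℝ^n, its inverse is smooth (so g is a C^∞-diffeomorphism of ℝ^n), and for all s, s' ∈ ℝ^n, (1/2)|s − s'| ≤ |g(s) − g(s')| ≤ (3/2)|s − s'|. -/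
open Function

theorem stmt_11_aux {E : Type*} [NormedAddCommGroup E] [NormedSpace ℝ E]
    [CompleteSpace E] [Nontrivial E]
    (g : E → E) (hg : ContDiff ℝ (⊤ : ℕ∞) g)
    (hb : ∀ s, ‖fderiv ℝ g s - ContinuousLinearMap.id ℝ E‖ ≤ 1 / 2) :
    Function.Bijective g ∧ ContDiff ℝ (⊤ : ℕ∞) (Function.invFun g) ∧
    ∀ s s', (1 / 2 : ℝ) * ‖s - s'‖ ≤ ‖g s - g s'‖ ∧
      ‖g s - g s'‖ ≤ (3 / 2 : ℝ) * ‖s - s'‖ := by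
  have hdiff : Differentiable ℝ g := hg.differentiable (by simp)
  -- key estimate
  have key : ∀ x y : E, ‖g x - g y - (x - y)‖ ≤ (1 / 2) * ‖x - y‖ := by
    intro x y
    have h1 : ∀ z ∈ (Set.univ : Set E),
        HasFDerivWithinAt (fun w => g w - w)
          (fderiv ℝ g z - ContinuousLinearMap.id ℝ E) Set.univ z := fun z _ =>
      (((hdiff z).hasFDerivAt).sub (hasFDerivAt_id z)).hasFDerivWithinAt
    have h2 : ∀ z ∈ (Set.univ : Set E),
        ‖fderiv ℝ g z - ContinuousLinearMap.id ℝ E‖ ≤ 1 / 2 := fun z _ => hb z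
    have h3 := convex_univ.norm_image_sub_le_of_norm_hasFDerivWithin_le h1 h2
      (Set.mem_univ y) (Set.mem_univ x)
    have heq : g x - g y - (x - y) = (g x - x) - (g y - y) := by abel
    rw [heq]
    exact h3
  have lower : ∀ s s' : E, (1 / 2 : ℝ) * ‖s - s'‖ ≤ ‖g s - g s'‖ := by
    intro s s'
    have h := key s s'
    have h2 : ‖s - s'‖ ≤ ‖g s - g s'‖ + ‖g s - g s' - (s - s')‖ := by
      calc ‖s - s'‖ = ‖(g s - g s') - (g s - g s' - (s - s'))‖ := by rw [sub_sub_cancel]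
        _ ≤ ‖g s - g s'‖ + ‖g s - g s' - (s - s')‖ := norm_sub_le _ _
    linarith
  have upper : ∀ s s' : E, ‖g s - g s'‖ ≤ (3 / 2 : ℝ) * ‖s - s'‖ := by
    intro s s'
    have h := key s s'
    have h2 := norm_add_le (g s - g s' - (s - s')) (s - s')
    simp only [sub_add_cancel] at h2
    linarith
  have hinj : Function.Injective g := by
    intro a b hab
    have h := lower a b
    rw [hab, sub_self, norm_zero] at h
    have h1 : ‖a - b‖ ≤ 0 := by linarith
    have h2 := le_antisymm h1 (norm_nonneg _)
    rwa [norm_eq_zero, sub_eq_zero] at h2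
  -- surjectivity via ApproximatesLinearOn
  have approx : ApproximatesLinearOn g
      ((ContinuousLinearEquiv.refl ℝ E : E ≃L[ℝ] E) : E →L[ℝ] E) Set.univ (1 / 2) := by
    intro x _ y _
    simpa using key x y
  have hsurj : Function.Surjective g := by
    refine approx.surjective (Or.inr ?_)
    have h1 : ‖(((ContinuousLinearEquiv.refl ℝ E).symm : E ≃L[ℝ] E) : E →L[ℝ] E)‖₊ = 1 := by
      simp [ContinuousLinearMap.nnnorm_id]
    rw [h1]
    have : ((1 / 2 : NNReal) : ℝ) < ((1⁻¹ : NNReal) : ℝ) := by norm_num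
    exact_mod_cast this
  have hbij : Function.Bijective g := ⟨hinj, hsurj⟩
  refine ⟨hbij, ?_, fun s s' => ⟨lower s s', upper s s'⟩⟩
  -- smoothness of the inverse
  rw [contDiff_iff_contDiffAt]
  intro y
  set a := Function.invFun g y with ha
  have hga : g a = y := Function.invFun_eq (hsurj y)
  -- fderiv at a is invertible
  have hnorm : ‖(1 : E →L[ℝ] E) - fderiv ℝ g a‖ < 1 := by
    have hb' := hb a
    calc ‖(1 : E →L[ℝ] E) - fderiv ℝ g a‖
        = ‖fderiv ℝ g a - ContinuousLinearMap.id ℝ E‖ := norm_sub_rev _ _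
      _ ≤ 1 / 2 := hb'
      _ < 1 := by norm_num
  set u : (E →L[ℝ] E)ˣ := Units.oneSub _ hnorm with hu
  have huval : (u : E →L[ℝ] E) = fderiv ℝ g a := by
    rw [hu, Units.val_oneSub, sub_sub_cancel]
  set e : E ≃L[ℝ] E := ContinuousLinearEquiv.ofUnit u with he
  have hecoe : (e : E →L[ℝ] E) = fderiv ℝ g a := huval
  have hf' : HasFDerivAt g (e : E →L[ℝ] E) a := by
    rw [hecoe]; exact (hdiff a).hasFDerivAt
  have hca : ContDiffAt ℝ (⊤ : ℕ∞) g a := hg.contDiffAt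
  have hinv : ContDiffAt ℝ (⊤ : ℕ∞) (hca.localInverse hf' (by simp)) (g a) :=
    hca.to_localInverse (f' := e) (hf' := hf') (hn := by simp)
  rw [hga] at hinv
  refine hinv.congr_of_eventuallyEq ?_
  have hstrict : HasStrictFDerivAt g (e : E →L[ℝ] E) a := hca.hasStrictFDerivAt' hf' (by simp)
  have hev : ∀ᶠ z in nhds (g a), g (hstrict.localInverse g e a z) = z :=
    hstrict.eventually_right_inverse
  rw [hga] at hev
  filter_upwards [hev] with z hz
  have hz2 : g (Function.invFun g z) = z := Function.invFun_eq (hsurj z)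
  exact hinj (hz2.trans hz.symm)

/-- A smooth map `g : ℝ^n → ℝ^n` whose derivative is everywhere within `1/2` of the
identity (in operator norm) is a `C^∞`-diffeomorphism of `ℝ^n`, and is bi-Lipschitz:
`(1/2)|s − s'| ≤ |g(s) − g(s')| ≤ (3/2)|s − s'|`. -/
theorem stmt_11 (n : ℕ) (hn : 1 ≤ n)
    (g : EuclideanSpace ℝ (Fin n) → EuclideanSpace ℝ (Fin n)) (hg : ContDiff ℝ (⊤ : ℕ∞) g)
    (hb : ∀ s, ‖fderiv ℝ g s - ContinuousLinearMap.id ℝ (EuclideanSpace ℝ (Fin n))‖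
        ≤ 1 / 2) :
    Function.Bijective g ∧ ContDiff ℝ (⊤ : ℕ∞) (Function.invFun g) ∧
    ∀ s s', (1 / 2 : ℝ) * ‖s - s'‖ ≤ ‖g s - g s'‖ ∧
      ‖g s - g s'‖ ≤ (3 / 2 : ℝ) * ‖s - s'‖ := by
  haveI : Nonempty (Fin n) := ⟨⟨0, hn⟩⟩
  haveI : Nontrivial (EuclideanSpace ℝ (Fin n)) := inferInstance
  exact stmt_11_aux g hg hb
end

section
/- Let τ : ℝ³ → ℝ be smooth with compact support, x₀ ∈ ℝ³, f(x, s) = s + τ(s)(x − x₀), and let Ω be a bounded open neighbourhood of x₀ such that sup_{s} ‖(d_s f)(x,s) − I₃‖ ≤ 1/2 for all x ∈ Ω. Then there exists C₀ > 0 such that for every multi-index α ∈ ℕ³, every x ∈ Ω, and all s, s' ∈ ℝ³: (i) C₀^{-1}|s − s'| ≤ |f(x,s) − f(x,s')| ≤ C₀|s − s'|; (ii) |∂_x^α f(x,s) − ∂_x^α f(x,s')| ≤ C₀ |s − s'|; and (iii) if |α| ≥ 1 then |∂_x^α f(x,s)| ≤ C₀. -/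
open scoped Nat

local notation "E3" => EuclideanSpace ℝ (Fin 3)

lemma mpd3 (α : Fin 3 → ℕ) (f : E3 → E3) :
    mpd α f = (pd 0)^[α 0] ((pd 1)^[α 1] ((pd 2)^[α 2] f)) := rfl

lemma pd_const (j : Fin 3) (v : E3) : pd j (fun _ : E3 => v) = fun _ => (0 : E3) := by
  funext y; simp [pd]

lemma pd_iter_zero (j : Fin 3) (n : ℕ) :
    (pd j)^[n] (fun _ : E3 => (0 : E3)) = fun _ => 0 := by
  induction n with
  | zero => rfl
  | succ m ih => rw [Function.iterate_succ_apply, pd_const]; exact ih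

lemma pd_iter_const (j : Fin 3) {n : ℕ} (hn : 1 ≤ n) (v : E3) :
    (pd j)^[n] (fun _ : E3 => v) = fun _ => 0 := by
  rcases n with _ | m
  · omega
  · rw [Function.iterate_succ_apply, pd_const]; exact pd_iter_zero j m

lemma pd_affine (j : Fin 3) (a : E3) (c : ℝ) (x₀ : E3) :
    pd j (fun t : E3 => a + c • (t - x₀)) = fun _ => c • EuclideanSpace.single j 1 := by
  funext y
  have h : HasFDerivAt (fun t : E3 => a + c • (t - x₀))
      (c • ContinuousLinearMap.id ℝ E3) y :=
    (((hasFDerivAt_id y).sub_const x₀).const_smul c).const_add a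
  simp [pd, h.fderiv]

lemma pd_iter_affine (j : Fin 3) {n : ℕ} (hn : 2 ≤ n) (a : E3) (c : ℝ) (x₀ : E3) :
    (pd j)^[n] (fun t : E3 => a + c • (t - x₀)) = fun _ => 0 := by
  rcases n with _ | m
  · omega
  · rw [Function.iterate_succ_apply, pd_affine]
    exact pd_iter_const j (by omega) _

lemma fin3_cases (i : Fin 3) : i = 0 ∨ i = 1 ∨ i = 2 := by
  fin_cases i
  · exact Or.inl rfl
  · exact Or.inr (Or.inl rfl)
  · exact Or.inr (Or.inr rfl)

/-- Classification of multi-indices on `Fin 3`. -/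
lemma alpha_tri (α : Fin 3 → ℕ) :
    (∀ i, α i = 0) ∨ (∃ j, α j = 1 ∧ ∀ i, i ≠ j → α i = 0) ∨ 2 ≤ α 0 + α 1 + α 2 := by
  by_cases h2 : 2 ≤ α 0 + α 1 + α 2
  · exact Or.inr (Or.inr h2)
  by_cases h0 : α 0 + α 1 + α 2 = 0
  · left; intro i; rcases fin3_cases i with rfl | rfl | rfl <;> omega
  right; left
  have h1 : α 0 + α 1 + α 2 = 1 := by omega
  by_cases ha : α 0 = 1
  · exact ⟨0, ha, fun i hi => by
      rcases fin3_cases i with rfl | rfl | rfl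
      · exact absurd rfl hi
      · omega
      · omega⟩
  by_cases hb : α 1 = 1
  · exact ⟨1, hb, fun i hi => by
      rcases fin3_cases i with rfl | rfl | rfl
      · omega
      · exact absurd rfl hi
      · omega⟩
  · exact ⟨2, by omega, fun i hi => by
      rcases fin3_cases i with rfl | rfl | rfl
      · omega
      · omega
      · exact absurd rfl hi⟩

lemma mpd_sum_zero (α : Fin 3 → ℕ) (h : ∀ i, α i = 0) (f : E3 → E3) :
    mpd α f = f := by
  rw [mpd3, h 0, h 1, h 2]; rfl

lemma mpd_single (α : Fin 3 → ℕ) (j : Fin 3) (hj : α j = 1)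
    (h0 : ∀ i, i ≠ j → α i = 0) (a : E3) (c : ℝ) (x₀ x : E3) :
    mpd α (fun t : E3 => a + c • (t - x₀)) x = c • EuclideanSpace.single j 1 := by
  rw [mpd3]
  rcases fin3_cases j with rfl | rfl | rfl
  · rw [h0 2 (by decide), h0 1 (by decide), hj]
    simp only [Function.iterate_zero, id, Function.iterate_one]
    rw [pd_affine]
  · rw [h0 2 (by decide), hj, h0 0 (by decide)]
    simp only [Function.iterate_zero, id, Function.iterate_one]
    rw [pd_affine]
  · rw [hj, h0 1 (by decide), h0 0 (by decide)]
    simp only [Function.iterate_zero, id, Function.iterate_one]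
    rw [pd_affine]

lemma mpd_big (α : Fin 3 → ℕ) (h : 2 ≤ α 0 + α 1 + α 2) (a : E3) (c : ℝ) (x₀ x : E3) :
    mpd α (fun t : E3 => a + c • (t - x₀)) x = 0 := by
  rw [mpd3]
  rcases Nat.lt_or_ge (α 2) 1 with h2 | h2
  · -- α 2 = 0
    have : α 2 = 0 := by omega
    rw [this]
    simp only [Function.iterate_zero, id]
    rcases Nat.lt_or_ge (α 1) 1 with h1 | h1
    · have e1 : α 1 = 0 := by omega
      rw [e1]
      simp only [Function.iterate_zero, id]
      rw [pd_iter_affine 0 (by omega)]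
    · rcases Nat.lt_or_ge (α 1) 2 with h1' | h1'
      · have e1 : α 1 = 1 := by omega
        rw [e1, Function.iterate_one, pd_affine, pd_iter_const 0 (by omega)]
      · rw [pd_iter_affine 1 h1', pd_iter_zero]
  · rcases Nat.lt_or_ge (α 2) 2 with h2' | h2'
    · have e2 : α 2 = 1 := by omega
      rw [e2, Function.iterate_one, pd_affine]
      rcases Nat.lt_or_ge (α 1) 1 with h1 | h1
      · have e1 : α 1 = 0 := by omega
        rw [e1]
        simp only [Function.iterate_zero, id]
        rw [pd_iter_const 0 (by omega)]
      · rw [pd_iter_const 1 h1, pd_iter_zero]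
    · rw [pd_iter_affine 2 h2', pd_iter_zero, pd_iter_zero]

/-- Uniform bounds for `f(x,s) = s + τ(s)(x − x₀)` on a bounded neighbourhood `Ω` of `x₀`
on which `sup_s ‖(d_s f)(x,s) − I₃‖ ≤ 1/2`: bi-Lipschitz bounds in `s`, Lipschitz bounds
in `s` for all `x`-derivatives, and uniform bounds for the `x`-derivatives of order ≥ 1. -/
theorem stmt_12 (τ : EuclideanSpace ℝ (Fin 3) → ℝ) (hτ : ContDiff ℝ (⊤ : ℕ∞) τ)
    (hsupp : HasCompactSupport τ) (x₀ : EuclideanSpace ℝ (Fin 3))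
    (Ω : Set (EuclideanSpace ℝ (Fin 3))) (hΩo : IsOpen Ω)
    (hΩb : Bornology.IsBounded Ω) (hx₀ : x₀ ∈ Ω)
    (hder : ∀ x ∈ Ω, ∀ s, ‖fderiv ℝ (fun t => t + τ t • (x - x₀)) s
        - ContinuousLinearMap.id ℝ (EuclideanSpace ℝ (Fin 3))‖ ≤ 1 / 2) :
    ∃ C₀ > (0 : ℝ),
      (∀ x ∈ Ω, ∀ s s' : EuclideanSpace ℝ (Fin 3),
        C₀⁻¹ * ‖s - s'‖ ≤ ‖(s + τ s • (x - x₀)) - (s' + τ s' • (x - x₀))‖ ∧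
        ‖(s + τ s • (x - x₀)) - (s' + τ s' • (x - x₀))‖ ≤ C₀ * ‖s - s'‖) ∧
      (∀ α : Fin 3 → ℕ, ∀ x ∈ Ω, ∀ s s' : EuclideanSpace ℝ (Fin 3),
        ‖mpd α (fun t => s + τ s • (t - x₀)) x
          - mpd α (fun t => s' + τ s' • (t - x₀)) x‖ ≤ C₀ * ‖s - s'‖) ∧
      (∀ α : Fin 3 → ℕ, 1 ≤ ∑ i, α i → ∀ x ∈ Ω, ∀ s : EuclideanSpace ℝ (Fin 3),
        ‖mpd α (fun t => s + τ s • (t - x₀)) x‖ ≤ C₀) := by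
  obtain ⟨L, hL⟩ := ContDiff.lipschitzWith_of_hasCompactSupport hsupp hτ (by simp)
  obtain ⟨B, hB⟩ := hsupp.exists_bound_of_continuous hτ.continuous
  have hB0 : (0:ℝ) ≤ B := le_trans (norm_nonneg _) (hB 0)
  have hL0 : (0:ℝ) ≤ L := L.coe_nonneg
  set C₀ : ℝ := 2 + L + B with hC₀def
  have hC₀2 : (2:ℝ) ≤ C₀ := by simp only [hC₀def]; linarith
  have hC₀pos : (0:ℝ) < C₀ := by linarith
  -- the mean-value bound on the perturbation
  have hdiffτ : ∀ x : EuclideanSpace ℝ (Fin 3),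
      Differentiable ℝ (fun t : EuclideanSpace ℝ (Fin 3) => τ t • (x - x₀)) :=
    fun x => (hτ.differentiable (by simp)).smul_const _
  have hmv : ∀ x ∈ Ω, ∀ s s' : EuclideanSpace ℝ (Fin 3),
      ‖τ s • (x - x₀) - τ s' • (x - x₀)‖ ≤ (1/2) * ‖s - s'‖ := by
    intro x hx s s'
    have hfid : ∀ t, fderiv ℝ (fun t : EuclideanSpace ℝ (Fin 3) => t + τ t • (x - x₀)) t
        = ContinuousLinearMap.id ℝ (EuclideanSpace ℝ (Fin 3))
          + fderiv ℝ (fun t => τ t • (x - x₀)) t := by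
      intro t
      rw [fderiv_fun_add differentiableAt_fun_id ((hdiffτ x) t), fderiv_fun_id]
    have hbound : ∀ t, ‖fderiv ℝ (fun t : EuclideanSpace ℝ (Fin 3) => τ t • (x - x₀)) t‖
        ≤ 1/2 := by
      intro t
      have h := hder x hx t
      rw [hfid t] at h
      simpa using h
    have := convex_univ.norm_image_sub_le_of_norm_fderiv_le
      (f := fun t : EuclideanSpace ℝ (Fin 3) => τ t • (x - x₀))
      (fun t _ => (hdiffτ x) t) (fun t _ => hbound t)
      (Set.mem_univ s') (Set.mem_univ s)
    simpa using this
  -- upper bound for the zeroth-order difference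
  have hup : ∀ x ∈ Ω, ∀ s s' : EuclideanSpace ℝ (Fin 3),
      ‖(s + τ s • (x - x₀)) - (s' + τ s' • (x - x₀))‖ ≤ C₀ * ‖s - s'‖ := by
    intro x hx s s'
    have hD : (s + τ s • (x - x₀)) - (s' + τ s' • (x - x₀))
        = (s - s') + (τ s • (x - x₀) - τ s' • (x - x₀)) := by abel
    rw [hD]
    have h1 := norm_add_le (s - s') (τ s • (x - x₀) - τ s' • (x - x₀))
    have h2 := hmv x hx s s'
    have h3 : (0:ℝ) ≤ ‖s - s'‖ := norm_nonneg _
    nlinarith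
  -- Lipschitz bound for τ
  have hτlip : ∀ s s' : EuclideanSpace ℝ (Fin 3), |τ s - τ s'| ≤ L * ‖s - s'‖ := by
    intro s s'
    have := hL.dist_le_mul s s'
    rwa [Real.dist_eq, dist_eq_norm] at this
  refine ⟨C₀, hC₀pos, ?_, ?_, ?_⟩
  · intro x hx s s'
    constructor
    · have hD : (s - s') = ((s + τ s • (x - x₀)) - (s' + τ s' • (x - x₀)))
          - (τ s • (x - x₀) - τ s' • (x - x₀)) := by abel
      have h1 : ‖s - s'‖ ≤ ‖(s + τ s • (x - x₀)) - (s' + τ s' • (x - x₀))‖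
          + ‖τ s • (x - x₀) - τ s' • (x - x₀)‖ := by
        rw [hD]; exact norm_sub_le _ _
      have h2 := hmv x hx s s'
      have hinv : C₀⁻¹ ≤ 1/2 := by
        rw [show (1:ℝ)/2 = 2⁻¹ by norm_num]
        exact inv_anti₀ (by norm_num) hC₀2
      have h3 : (0:ℝ) ≤ ‖s - s'‖ := norm_nonneg _
      have h4 : C₀⁻¹ * ‖s - s'‖ ≤ (1/2) * ‖s - s'‖ :=
        mul_le_mul_of_nonneg_right hinv h3
      linarith
    · exact hup x hx s s'
  · intro α x hx s s'
    rcases alpha_tri α with h | ⟨j, hj, h0⟩ | h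
    · rw [mpd_sum_zero α h, mpd_sum_zero α h]
      simpa using hup x hx s s'
    · rw [mpd_single α j hj h0, mpd_single α j hj h0, ← sub_smul, norm_smul,
        EuclideanSpace.norm_single]
      have h1 := hτlip s s'
      have h2 : (0:ℝ) ≤ ‖s - s'‖ := norm_nonneg _
      have : ‖τ s - τ s'‖ = |τ s - τ s'| := rfl
      rw [this, norm_one, mul_one]
      nlinarith
    · rw [mpd_big α h, mpd_big α h]
      simp only [sub_zero, norm_zero]
      positivity
  · intro α hα x hx s
    rcases alpha_tri α with h | ⟨j, hj, h0⟩ | h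
    · rw [Fin.sum_univ_three] at hα
      have := h 0; have := h 1; have := h 2; omega
    · rw [mpd_single α j hj h0, norm_smul, EuclideanSpace.norm_single, norm_one, mul_one]
      have := hB s
      simp only [Real.norm_eq_abs] at this ⊢
      linarith
    · rw [mpd_big α h, norm_zero]
      linarith
end

section
/- Let τ : ℝ³ → ℝ be smooth with compact support, x₀ ∈ ℝ³, f(x, s) = s + τ(s)(x − x₀), and let Ω be an open neighbourhood of x₀ such that sup_s ‖(d_s f)(x,s) − I₃‖ ≤ 1/2 for all x ∈ Ω, so that for each x ∈ Ω the map f(x,·) is a C^∞-diffeomorphism of ℝ³; let g(x,·) denote its inverse. Then for every x ∈ Ω and s ∈ ℝ³, the map x ↦ g(x, y) is differentiable at (x, y = f(x,s)) and (d_x g)(x, f(x,s)) = −τ(s) · ((d_s f)(x,s))^{-1} = −τ(s) · (d_y g)(x, f(x,s)). -/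
open Asymptotics Filter Topology

/-- For `f(x,s) = s + τ(s)(x − x₀)` with inverse diffeomorphisms `g(x,·)` of `f(x,·)`
for `x ∈ Ω`, the map `x ↦ g(x, y)` is differentiable at `(x, y = f(x,s))` with
`(d_x g)(x, f(x,s)) = −τ(s)·((d_s f)(x,s))⁻¹ = −τ(s)·(d_y g)(x, f(x,s))`. -/
theorem stmt_14 (τ : EuclideanSpace ℝ (Fin 3) → ℝ) (hτ : ContDiff ℝ (⊤ : ℕ∞) τ)
    (hsupp : HasCompactSupport τ) (x₀ : EuclideanSpace ℝ (Fin 3))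
    (Ω : Set (EuclideanSpace ℝ (Fin 3))) (hΩo : IsOpen Ω) (hx₀ : x₀ ∈ Ω)
    (hder : ∀ x ∈ Ω, ∀ s, ‖fderiv ℝ (fun t => t + τ t • (x - x₀)) s
        - ContinuousLinearMap.id ℝ (EuclideanSpace ℝ (Fin 3))‖ ≤ 1 / 2)
    (g : EuclideanSpace ℝ (Fin 3) → EuclideanSpace ℝ (Fin 3) → EuclideanSpace ℝ (Fin 3))
    (hg : ∀ x ∈ Ω, (∀ s, g x (s + τ s • (x - x₀)) = s) ∧
      (∀ y, g x y + τ (g x y) • (x - x₀) = y)) :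
    ∀ x ∈ Ω, ∀ s : EuclideanSpace ℝ (Fin 3),
      HasFDerivAt (fun x' => g x' (s + τ s • (x - x₀)))
        ((-τ s) • fderiv ℝ (g x) (s + τ s • (x - x₀))) x ∧
      ∀ v, fderiv ℝ (fun t => t + τ t • (x - x₀)) s
          (fderiv ℝ (g x) (s + τ s • (x - x₀)) v) = v := by
  have hτd : Differentiable ℝ τ := hτ.differentiable (by simp)
  have hfd : ∀ x' : EuclideanSpace ℝ (Fin 3),
      Differentiable ℝ (fun t => t + τ t • (x' - x₀)) :=
    fun x' => differentiable_id.add (hτd.smul_const _)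
  have hsplit : ∀ (x' t : EuclideanSpace ℝ (Fin 3)),
      fderiv ℝ (fun u => u + τ u • (x' - x₀)) t
        = ContinuousLinearMap.id ℝ (EuclideanSpace ℝ (Fin 3))
          + fderiv ℝ (fun u => τ u • (x' - x₀)) t := by
    intro x' t
    rw [fderiv_fun_add differentiableAt_fun_id ((hτd t).smul_const _)]
    simp
  have hψle : ∀ x' ∈ Ω, ∀ t, ‖fderiv ℝ (fun u => τ u • (x' - x₀)) t‖ ≤ 1/2 := by
    intro x' hx' t
    have h := hder x' hx' t
    rw [hsplit x' t] at h
    simpa using h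
  have key : ∀ x' ∈ Ω, ∀ a b : EuclideanSpace ℝ (Fin 3),
      ‖a - b‖ ≤ 2 * ‖(a + τ a • (x' - x₀)) - (b + τ b • (x' - x₀))‖ := by
    intro x' hx' a b
    have hmv := Convex.norm_image_sub_le_of_norm_fderiv_le
        (fun t _ => ((hτd t).smul_const (x' - x₀)))
        (fun t _ => hψle x' hx' t) convex_univ (Set.mem_univ b) (Set.mem_univ a)
    have hdecomp : ‖a - b‖ ≤ ‖(a + τ a • (x' - x₀)) - (b + τ b • (x' - x₀))‖
        + ‖τ a • (x' - x₀) - τ b • (x' - x₀)‖ := by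
      have : a - b = ((a + τ a • (x' - x₀)) - (b + τ b • (x' - x₀)))
          - (τ a • (x' - x₀) - τ b • (x' - x₀)) := by abel
      rw [this]
      exact norm_sub_le _ _
    have hnn : (0:ℝ) ≤ ‖a - b‖ := norm_nonneg _
    linarith [hmv]
  intro x hx s
  obtain ⟨hg1, hg2⟩ := hg x hx
  set y : EuclideanSpace ℝ (Fin 3) := s + τ s • (x - x₀) with hy
  have hgxy : g x y = s := hg1 s
  set F := fderiv ℝ (fun t => t + τ t • (x - x₀)) s with hF
  set P := fderiv ℝ (fun u => τ u • (x - x₀)) s with hPdef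
  have hFP : F = 1 + P := by
    rw [hF, hsplit]; rfl
  have hPn : ‖-P‖ < 1 := by
    rw [norm_neg]
    have := hψle x hx s
    rw [← hPdef] at this
    linarith
  set u : (EuclideanSpace ℝ (Fin 3) →L[ℝ] EuclideanSpace ℝ (Fin 3))ˣ :=
    Units.oneSub (-P) hPn with hu
  have huv : (u : EuclideanSpace ℝ (Fin 3) →L[ℝ] EuclideanSpace ℝ (Fin 3)) = F := by
    rw [hFP]
    show 1 - -P = 1 + P
    rw [sub_neg_eq_add]
  have hli : Function.LeftInverse
      (↑u⁻¹ : EuclideanSpace ℝ (Fin 3) →L[ℝ] EuclideanSpace ℝ (Fin 3)) F := by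
    intro v
    have h := congrArg (fun m : EuclideanSpace ℝ (Fin 3) →L[ℝ] EuclideanSpace ℝ (Fin 3) =>
      m v) u.inv_mul
    simpa [huv, ContinuousLinearMap.mul_apply] using h
  have hri : Function.RightInverse
      (↑u⁻¹ : EuclideanSpace ℝ (Fin 3) →L[ℝ] EuclideanSpace ℝ (Fin 3)) F := by
    intro v
    have h := congrArg (fun m : EuclideanSpace ℝ (Fin 3) →L[ℝ] EuclideanSpace ℝ (Fin 3) =>
      m v) u.mul_inv
    simpa [huv, ContinuousLinearMap.mul_apply] using h
  set Fe : EuclideanSpace ℝ (Fin 3) ≃L[ℝ] EuclideanSpace ℝ (Fin 3) :=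
    ContinuousLinearEquiv.equivOfInverse F _ hli hri with hFe
  have hFecoe : (Fe : EuclideanSpace ℝ (Fin 3) →L[ℝ] EuclideanSpace ℝ (Fin 3)) = F := rfl
  have hlip : LipschitzWith 2 (g x) := by
    apply LipschitzWith.of_dist_le_mul
    intro y₁ y₂
    have h := key x hx (g x y₁) (g x y₂)
    rw [hg2 y₁, hg2 y₂] at h
    simpa [dist_eq_norm] using h
  have hfs : HasFDerivAt (fun t => t + τ t • (x - x₀))
      (Fe : EuclideanSpace ℝ (Fin 3) →L[ℝ] EuclideanSpace ℝ (Fin 3)) (g x y) := by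
    rw [hgxy, hFecoe, hF]
    exact ((hfd x) s).hasFDerivAt
  have hD0 : HasFDerivAt (g x)
      (Fe.symm : EuclideanSpace ℝ (Fin 3) →L[ℝ] EuclideanSpace ℝ (Fin 3)) y :=
    HasFDerivAt.of_local_left_inverse hlip.continuous.continuousAt hfs
      (Eventually.of_forall fun y' => hg2 y')
  have hDf : fderiv ℝ (g x) y
      = (Fe.symm : EuclideanSpace ℝ (Fin 3) →L[ℝ] EuclideanSpace ℝ (Fin 3)) := hD0.fderiv
  set D : EuclideanSpace ℝ (Fin 3) →L[ℝ] EuclideanSpace ℝ (Fin 3) :=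
    (Fe.symm : EuclideanSpace ℝ (Fin 3) →L[ℝ] EuclideanSpace ℝ (Fin 3)) with hDdef
  constructor
  · -- main differentiability claim
    rw [hDf]
    refine HasFDerivAt.of_isLittleO ?_
    have hΩn : ∀ᶠ x' in 𝓝 x, x' ∈ Ω := hΩo.mem_nhds hx
    have hest : ∀ᶠ x' in 𝓝 x, ‖g x' y - s‖ ≤ (2 * |τ s|) * ‖x' - x‖ := by
      filter_upwards [hΩn] with x' hx'
      have h := key x' hx' (g x' y) s
      rw [(hg x' hx').2 y] at h
      have heq : y - (s + τ s • (x' - x₀)) = τ s • (x - x') := by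
        rw [hy]; module
      rw [heq, norm_smul, Real.norm_eq_abs, norm_sub_rev x x'] at h
      linarith
    have htend : Tendsto (fun x' => g x' y) (𝓝 x) (𝓝 s) := by
      rw [tendsto_iff_norm_sub_tendsto_zero]
      have hb : Tendsto (fun x' : EuclideanSpace ℝ (Fin 3) =>
          (2 * |τ s|) * ‖x' - x‖) (𝓝 x) (𝓝 0) := by
        have h0 : Tendsto (fun x' : EuclideanSpace ℝ (Fin 3) => x' - x) (𝓝 x) (𝓝 (x - x)) :=
          (continuous_id.sub continuous_const).tendsto x
        have : Tendsto (fun x' : EuclideanSpace ℝ (Fin 3) => ‖x' - x‖) (𝓝 x) (𝓝 0) := by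
          simpa using h0.norm
        simpa using this.const_mul (2 * |τ s|)
      exact squeeze_zero' (Eventually.of_forall fun _ => norm_nonneg _) hest hb
    have hτt : Tendsto (fun x' => τ (g x' y)) (𝓝 x) (𝓝 (τ s)) :=
      (hτ.continuous.tendsto s).comp htend
    have hxx : Tendsto (fun x' : EuclideanSpace ℝ (Fin 3) => x' - x) (𝓝 x) (𝓝 0) := by
      have h0 : Tendsto (fun x' : EuclideanSpace ℝ (Fin 3) => x' - x) (𝓝 x) (𝓝 (x - x)) :=
        (continuous_id.sub continuous_const).tendsto x
      simpa using h0
    have hk : Tendsto (fun x' => y + (-τ (g x' y)) • (x' - x)) (𝓝 x) (𝓝 y) := by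
      have h0 : Tendsto (fun x' => (-τ (g x' y)) • (x' - x)) (𝓝 x) (𝓝 0) := by
        simpa using hτt.neg.smul hxx
      simpa using (tendsto_const_nhds (x := y)).add h0
    have h1 : (fun x' => g x (y + (-τ (g x' y)) • (x' - x)) - g x y
          - D ((-τ (g x' y)) • (x' - x))) =o[𝓝 x] fun x' => x' - x := by
      have hg0 := hD0.isLittleO
      have hcomp := hg0.comp_tendsto hk
      simp only [Function.comp_def, add_sub_cancel_left] at hcomp
      refine hcomp.trans_isBigO ?_
      apply IsBigO.of_bound (|τ s| + 1)
      have hball : ∀ᶠ x' in 𝓝 x, |τ (g x' y) - τ s| < 1 := by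
        have := hτt (Metric.ball_mem_nhds (τ s) one_pos)
        filter_upwards [this] with x' hx'
        simpa [Real.dist_eq] using hx'
      filter_upwards [hball] with x' hx'
      rw [norm_smul, norm_neg, Real.norm_eq_abs]
      have : |τ (g x' y)| ≤ |τ s| + 1 := by
        have := abs_sub_abs_le_abs_sub (τ (g x' y)) (τ s)
        linarith
      exact mul_le_mul_of_nonneg_right this (norm_nonneg _)
    have h2 : (fun x' => (τ s - τ (g x' y)) • D (x' - x)) =o[𝓝 x] fun x' => x' - x := by
      have ha : (fun x' => τ s - τ (g x' y)) =o[𝓝 x]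
          (fun _ : EuclideanSpace ℝ (Fin 3) => (1:ℝ)) := by
        rw [isLittleO_one_iff]
        simpa using (tendsto_const_nhds (x := τ s)).sub hτt
      have hb : (fun x' : EuclideanSpace ℝ (Fin 3) => D (x' - x)) =O[𝓝 x]
          fun x' => x' - x := D.isBigO_comp _ _
      have hsm := ha.smul_isBigO hb
      simpa using hsm
    refine (h1.add h2).congr' ?_ EventuallyEq.rfl
    filter_upwards [hΩn] with x' hx'
    have ht' : y + (-τ (g x' y)) • (x' - x) = g x' y + τ (g x' y) • (x - x₀) := by
      have h0 := (hg x' hx').2 y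
      calc y + (-τ (g x' y)) • (x' - x)
          = (g x' y + τ (g x' y) • (x' - x₀)) + (-τ (g x' y)) • (x' - x) := by rw [h0]
        _ = g x' y + τ (g x' y) • (x - x₀) := by module
    have hgsub : g x (y + (-τ (g x' y)) • (x' - x)) = g x' y := by
      rw [ht', hg1 (g x' y)]
    rw [hgsub, map_smul, ContinuousLinearMap.smul_apply]
    module
  · intro v
    rw [hDf]
    show F (Fe.symm v) = v
    rw [← hFecoe]
    exact Fe.apply_symm_apply v
end

section
/- Let τ : ℝ³ → ℝ be smooth with compact support, x₀ ∈ ℝ³, f(x, s) = s + τ(s)(x − x₀), and let Ω be a bounded open neighbourhood of x₀ such that sup_s ‖(d_s f)(x,s) − I₃‖ ≤ 1/2 for all x ∈ Ω (so each f(x,·) is injective). Then there exists K₁ > 0 such that for every multi-index α ∈ ℕ³, every x ∈ Ω, and every y ∈ ℝ³ with y ≠ x₀, the function h(x) = |f(x, x₀) − f(x, y)|^{-1} is well defined and smooth in x on Ω and satisfies |∂_x^α h(x)| ≤ K₁^{|α|+1} · (α!) · |x₀ − y|^{-1}. -/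
open scoped Nat ENNReal NNReal

local notation "E3" => EuclideanSpace ℝ (Fin 3)

noncomputable def pdl {d : ℕ} (l : List (Fin d)) (f : EuclideanSpace ℝ (Fin d) → ℝ) :
    EuclideanSpace ℝ (Fin d) → ℝ :=
  l.foldr (fun j g => pd j g) f

lemma analyticAt_rlog {x : ℝ} (hx : 0 < x) : AnalyticAt ℝ Real.log x := by
  have h1 : AnalyticAt ℂ Complex.log (x : ℂ) :=
    analyticAt_clog (Complex.mem_slitPlane_iff.2 (Or.inl (by simpa using hx)))
  have h2 : AnalyticAt ℝ (fun t : ℝ => Complex.log (t : ℂ)) x :=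
    (h1.restrictScalars).comp (Complex.ofRealCLM.analyticAt x)
  have h3 : AnalyticAt ℝ (fun t : ℝ => (Complex.log (t : ℂ)).re) x := by
    exact AnalyticAt.comp (g := fun z : ℂ => z.re) (f := fun t : ℝ => Complex.log (t:ℂ))
      (Complex.reCLM.analyticAt (Complex.log ((x:ℝ):ℂ))) h2
  have : (fun t : ℝ => (Complex.log (t : ℂ)).re) = Real.log := by
    funext t; exact Complex.log_ofReal_re t
  rwa [this] at h3

lemma nat_choose_le_two_pow (n k : ℕ) : n.choose k ≤ 2 ^ n := by
  rcases le_or_gt k n with h | h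
  · calc n.choose k ≤ ∑ m ∈ Finset.range (n+1), n.choose m :=
        Finset.single_le_sum (fun i _ => Nat.zero_le _) (Finset.mem_range.2 (Nat.lt_succ_of_le h))
    _ = 2 ^ n := Nat.sum_range_choose n
  · simp [Nat.choose_eq_zero_of_lt h]

lemma fact_add_le_real (m k : ℕ) : ((m+k)! : ℝ) ≤ 2 ^ (m+k) * m ! * k ! := by
  have h : (m+k)! = (m+k).choose k * k ! * m ! := by
    have := Nat.choose_mul_factorial_mul_factorial (Nat.le_add_left k m)
    simpa using this.symm
  have h2 : (m+k).choose k ≤ 2 ^ (m+k) := nat_choose_le_two_pow _ _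
  calc ((m+k)! : ℝ) = ((m+k).choose k : ℝ) * k ! * m ! := by rw [h]; push_cast; ring
  _ ≤ 2 ^ (m+k) * k ! * m ! := by
      have := (Nat.cast_le (α := ℝ)).2 h2
      push_cast at this
      gcongr
  _ = 2 ^ (m+k) * m ! * k ! := by ring

lemma norm_derivSeries_le {E F : Type*} [NormedAddCommGroup E] [NormedSpace ℝ E]
    [NormedAddCommGroup F] [NormedSpace ℝ F] (p : FormalMultilinearSeries ℝ E F) (k : ℕ) :
    ‖p.derivSeries k‖ ≤ (k+1) * ‖p (k+1)‖ := by
  have h1 : ‖p.derivSeries k‖ ≤ 1 * ‖p.changeOriginSeries 1 k‖ := by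
    apply (ContinuousLinearMap.norm_compContinuousMultilinearMap_le _ _).trans
    gcongr
    exact ContinuousLinearMap.opNorm_le_bound _ zero_le_one (by simp)
  rw [one_mul] at h1
  refine h1.trans ?_
  have h2 : ‖p.changeOriginSeries 1 k‖₊ ≤
      ∑' _ : { s : Finset (Fin (1 + k)) // s.card = k }, ‖p (1 + k)‖₊ :=
    p.nnnorm_changeOriginSeries_le_tsum 1 k
  have hcard : Fintype.card { s : Finset (Fin (1 + k)) // s.card = k } = k + 1 := by
    rw [Fintype.card_finset_len, Fintype.card_fin]
    rw [Nat.add_comm 1 k, Nat.choose_succ_self_right]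
  have h3 : (‖p.changeOriginSeries 1 k‖₊ : ℝ) ≤ (k+1) * ‖p (1+k)‖ := by
    have := h2
    rw [tsum_fintype] at this
    calc (‖p.changeOriginSeries 1 k‖₊ : ℝ) ≤
        ((∑ _x : { s : Finset (Fin (1 + k)) // s.card = k }, ‖p (1 + k)‖₊ : NNReal) : ℝ) := by
          exact_mod_cast this
    _ = (Fintype.card { s : Finset (Fin (1 + k)) // s.card = k } : ℝ) * ‖p (1+k)‖ := by
          rw [Finset.sum_const]
          simp [Finset.card_univ, mul_comm]
    _ = (k+1) * ‖p (1+k)‖ := by rw [hcard]; push_cast; ring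
  have hnorm : ‖p (1+k)‖ = ‖p (k+1)‖ := by rw [Nat.add_comm]
  rw [hnorm, coe_nnnorm] at h3
  push_cast at h3
  exact h3

lemma QQ (w : E3) (r : ℝ≥0∞) (C ρ : ℝ) (hρ : 0 < ρ) (hρr : ENNReal.ofReal ρ ≤ r)
    (hC : 0 ≤ C) :
    ∀ (n m : ℕ) (F : Type) [NormedAddCommGroup F] [NormedSpace ℝ F]
      [CompleteSpace F]
      (f : E3 → F) (p : FormalMultilinearSeries ℝ E3 F),
      HasFPowerSeriesOnBall f p w r →
      (∀ k, ‖p k‖ * k ! * ρ^(m+k) ≤ C * (m+k)!) →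
      ∀ z, dist z w ≤ ρ/4 →
      ‖iteratedFDeriv ℝ n f z‖ ≤ 2 * C * (m+n)! * (2/ρ)^(m+n) := by
  intro n
  induction n with
  | zero =>
    intro m F _ _ _ f p h hp z hz
    rw [norm_iteratedFDeriv_zero, Nat.add_zero]
    set y := z - w with hy
    have hyn : ‖y‖ ≤ ρ/4 := by rw [hy, ← dist_eq_norm]; exact hz
    have hmem : y ∈ Metric.eball (0 : E3) r := by
      rw [EMetric.mem_ball, edist_eq_enorm_sub, sub_zero, enorm_eq_nnnorm]
      calc (‖y‖₊ : ℝ≥0∞) = ENNReal.ofReal ‖y‖ := by rw [ofReal_norm, enorm_eq_nnnorm]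
      _ < ENNReal.ofReal ρ := by
          rw [ENNReal.ofReal_lt_ofReal_iff hρ]
          linarith
      _ ≤ r := hρr
    have hs : HasSum (fun k => p k fun _ => y) (f (w + y)) := h.hasSum hmem
    have hwz : w + y = z := by rw [hy]; abel
    rw [hwz] at hs
    have hb : ∀ k, ‖p k fun _ => y‖ ≤ (C * m ! * (2/ρ)^m) * (1/2)^k := by
      intro k
      have h1 : ‖p k fun _ => y‖ ≤ ‖p k‖ * ‖y‖^k := by
        have := (p k).le_opNorm (fun _ => y)
        simpa [Finset.prod_const] using this
      have h2 : ‖p k‖ * ‖y‖^k ≤ ‖p k‖ * (ρ/4)^k := by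
        gcongr
      have h3 : ‖p k‖ * (ρ/4)^k * ((k ! : ℝ) * ρ^(m+k)) ≤
          C * (m+k)! * (ρ/4)^k := by
        have hh := hp k
        calc ‖p k‖ * (ρ/4)^k * ((k ! : ℝ) * ρ^(m+k))
            = (‖p k‖ * k ! * ρ^(m+k)) * (ρ/4)^k := by ring
        _ ≤ (C * (m+k)!) * (ρ/4)^k := by
            have h4k : (0:ℝ) ≤ (ρ/4)^k := by positivity
            exact mul_le_mul_of_nonneg_right hh h4k
      have h4 : ((m+k)! : ℝ) ≤ 2^(m+k) * m ! * k ! := fact_add_le_real m k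
      -- combine
      have hk0 : (0:ℝ) < k ! := by exact_mod_cast Nat.factorial_pos k
      have hm0 : (0:ℝ) < m ! := by exact_mod_cast Nat.factorial_pos m
      have hρk : (0:ℝ) < ρ^(m+k) := by positivity
      have key1 : (‖p k‖ * (ρ/4)^k * ρ^(m+k)) * k ! ≤
          (C * 2^(m+k) * m ! * (ρ/4)^k) * k ! := by
        calc (‖p k‖ * (ρ/4)^k * ρ^(m+k)) * (k ! : ℝ)
            = ‖p k‖ * (ρ/4)^k * ((k ! : ℝ) * ρ^(m+k)) := by ring
        _ ≤ C * (m+k)! * (ρ/4)^k := h3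
        _ ≤ C * (2^(m+k) * m ! * k !) * (ρ/4)^k := by
            have h4k : (0:ℝ) ≤ (ρ/4)^k := by positivity
            have := mul_le_mul_of_nonneg_left h4 hC
            exact mul_le_mul_of_nonneg_right this h4k
        _ = (C * 2^(m+k) * m ! * (ρ/4)^k) * k ! := by ring
      have key : ‖p k‖ * (ρ/4)^k * ρ^(m+k) ≤ C * 2^(m+k) * m ! * (ρ/4)^k :=
        le_of_mul_le_mul_right key1 hk0
      refine (h1.trans h2).trans ?_
      rw [← mul_le_mul_iff_left₀ hρk]
      refine key.trans_eq ?_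
      have h2k : (4:ℝ)^k = 2^k * 2^k := by rw [← mul_pow]; norm_num
      rw [pow_add, pow_add, div_pow, div_pow, div_pow, h2k]
      have hρ0 : ρ ≠ 0 := ne_of_gt hρ
      field_simp
      ring
    have hgeo : Summable (fun k : ℕ => (C * m ! * (2/ρ)^m) * (1/2)^k) :=
      (summable_geometric_of_lt_one (by norm_num) (by norm_num)).mul_left _
    have hsum : Summable (fun k => ‖p k fun _ => y‖) :=
      Summable.of_nonneg_of_le (fun k => norm_nonneg _) hb hgeo
    calc ‖f z‖ = ‖∑' k, p k fun _ => y‖ := by rw [hs.tsum_eq]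
    _ ≤ ∑' k, ‖p k fun _ => y‖ := norm_tsum_le_tsum_norm hsum
    _ ≤ ∑' k : ℕ, (C * m ! * (2/ρ)^m) * (1/2)^k := Summable.tsum_le_tsum hb hsum hgeo
    _ = (C * m ! * (2/ρ)^m) * 2 := by
        rw [tsum_mul_left, tsum_geometric_of_lt_one (by norm_num) (by norm_num)]
        norm_num
    _ = 2 * C * m ! * (2/ρ)^m := by ring
  | succ n ih =>
    intro m F iF1 iF2 iF3 f p h hp z hz
    rw [← norm_iteratedFDeriv_fderiv]
    have hp' : ∀ k, ‖p.derivSeries k‖ * k ! * ρ^((m+1)+k) ≤ C * ((m+1)+k)! := by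
      intro k
      have h1 : ‖p.derivSeries k‖ ≤ (k+1) * ‖p (k+1)‖ := norm_derivSeries_le p k
      have h2 := hp (k+1)
      calc ‖p.derivSeries k‖ * k ! * ρ^((m+1)+k)
          ≤ ((k+1) * ‖p (k+1)‖) * k ! * ρ^((m+1)+k) := by
            have hρk : (0:ℝ) ≤ ρ^((m+1)+k) := by positivity
            have hk0 : (0:ℝ) ≤ k ! := Nat.cast_nonneg _
            exact mul_le_mul_of_nonneg_right (mul_le_mul_of_nonneg_right h1 hk0) hρk
      _ = ‖p (k+1)‖ * ((k+1) * k !) * ρ^(m+(k+1)) := by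
            rw [show (m+1)+k = m+(k+1) by ring]; ring
      _ = ‖p (k+1)‖ * (k+1)! * ρ^(m+(k+1)) := by
            rw [Nat.factorial_succ]; push_cast; ring
      _ ≤ C * (m+(k+1))! := h2
      _ = C * ((m+1)+k)! := by rw [show m+(k+1) = (m+1)+k by ring]
    have := ih (m+1) (E3 →L[ℝ] F)
      (fderiv ℝ f) p.derivSeries h.fderiv hp' z hz
    calc ‖iteratedFDeriv ℝ n (fderiv ℝ f) z‖ ≤ 2*C*((m+1)+n)! * (2/ρ)^((m+1)+n) := this
    _ = 2*C*(m+(n+1))! * (2/ρ)^(m+(n+1)) := by rw [show (m+1)+n = m+(n+1) by ring]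

lemma pdl_nil {d : ℕ} (f : EuclideanSpace ℝ (Fin d) → ℝ) : pdl [] f = f := rfl

lemma pdl_cons {d : ℕ} (j : Fin d) (l : List (Fin d)) (f) :
    pdl (j :: l) f = pd j (pdl l f) := rfl

lemma pdl_append {d : ℕ} (l₁ l₂ : List (Fin d)) (f) :
    pdl (l₁ ++ l₂) f = pdl l₁ (pdl l₂ f) := by
  simp [pdl, List.foldr_append]

lemma pdl_replicate {d : ℕ} (k : ℕ) (j : Fin d) (f) :
    pdl (List.replicate k j) f = (pd j)^[k] f := by
  induction k with
  | zero => rfl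
  | succ k ih => rw [List.replicate_succ, pdl_cons, ih, Function.iterate_succ_apply']

lemma mpd_eq_pdl {d : ℕ} (α : Fin d → ℕ) (f : EuclideanSpace ℝ (Fin d) → ℝ) :
    mpd α f = pdl ((List.finRange d).flatMap (fun j => List.replicate (α j) j)) f := by
  rw [mpd]
  induction (List.finRange d) with
  | nil => rfl
  | cons j l ih =>
    rw [List.foldr_cons, List.flatMap_cons, pdl_append, pdl_replicate, ih]

lemma pd_congr {d : ℕ} {A : Type*} [NormedAddCommGroup A] [NormedSpace ℝ A]
    {U : Set (EuclideanSpace ℝ (Fin d))} (hU : IsOpen U) (j : Fin d)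
    {f g : EuclideanSpace ℝ (Fin d) → A} (h : Set.EqOn f g U) :
    Set.EqOn (pd j f) (pd j g) U := by
  intro x hx
  unfold pd
  rw [Filter.EventuallyEq.fderiv_eq (Filter.eventuallyEq_of_mem (hU.mem_nhds hx) h)]

lemma pdl_congr {d : ℕ} {U : Set (EuclideanSpace ℝ (Fin d))} (hU : IsOpen U)
    (l : List (Fin d)) {f g : EuclideanSpace ℝ (Fin d) → ℝ} (h : Set.EqOn f g U) :
    Set.EqOn (pdl l f) (pdl l g) U := by
  induction l with
  | nil => exact h
  | cons j l ih => exact pd_congr hU j ih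

lemma foldr_pd_eq {V : Set E3} (hV : IsOpen V) {f : E3 → ℝ} (hf : AnalyticOnNhd ℝ f V)
    (l : List (Fin 3)) :
    ∀ x ∈ V, pdl l f x =
      iteratedFDeriv ℝ l.length f x (fun i => EuclideanSpace.single (l.get i) 1) := by
  induction l with
  | nil =>
    intro x hx
    exact (iteratedFDeriv_zero_apply _).symm
  | cons j l ih =>
    intro x hx
    have hG : AnalyticOnNhd ℝ (iteratedFDeriv ℝ l.length f) V := hf.iteratedFDeriv l.length
    have hGd : DifferentiableAt ℝ (iteratedFDeriv ℝ l.length f) x := (hG x hx).differentiableAt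
    set vl : (i : Fin l.length) → E3 := fun i => EuclideanSpace.single (l.get i) 1 with hvl
    set T := ContinuousMultilinearMap.apply ℝ (fun _ : Fin l.length => E3) ℝ vl with hT
    have heq : Set.EqOn (pdl l f) (fun y => T (iteratedFDeriv ℝ l.length f y)) V := by
      intro y hy
      exact ih y hy
    rw [pdl_cons]
    have h1 : pd j (pdl l f) x = pd j (fun y => T (iteratedFDeriv ℝ l.length f y)) x :=
      pd_congr hV j heq hx
    rw [h1]
    have h2 : fderiv ℝ (fun y => T (iteratedFDeriv ℝ l.length f y)) x =
        T.comp (fderiv ℝ (iteratedFDeriv ℝ l.length f) x) :=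
      (T.hasFDerivAt.comp x hGd.hasFDerivAt).fderiv
    show fderiv ℝ (fun y => T (iteratedFDeriv ℝ l.length f y)) x (EuclideanSpace.single j 1) = _
    rw [h2]
    simp only [List.length_cons]
    rw [iteratedFDeriv_succ_apply_left]
    simp only [ContinuousLinearMap.coe_comp', Function.comp_apply, hT,
      ContinuousMultilinearMap.apply_apply]
    rfl

lemma contDiffOn_pd {d : ℕ} {U : Set (EuclideanSpace ℝ (Fin d))} (hU : IsOpen U) (j : Fin d)
    {f : EuclideanSpace ℝ (Fin d) → ℝ} (hf : ContDiffOn ℝ (⊤ : ℕ∞) f U) :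
    ContDiffOn ℝ (⊤ : ℕ∞) (pd j f) U :=
  (hf.fderiv_of_isOpen hU (by simp)).clm_apply contDiffOn_const

lemma contDiffOn_pdl {d : ℕ} {U : Set (EuclideanSpace ℝ (Fin d))} (hU : IsOpen U)
    (l : List (Fin d)) {f : EuclideanSpace ℝ (Fin d) → ℝ} (hf : ContDiffOn ℝ (⊤ : ℕ∞) f U) :
    ContDiffOn ℝ (⊤ : ℕ∞) (pdl l f) U := by
  induction l with
  | nil => exact hf
  | cons j l ih => exact contDiffOn_pd hU j ih

section chain

variable {V : Set E3} (hV : IsOpen V) (b x₀ : E3) (c : ℝ)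

lemma hasFDerivAt_affine (x : E3) :
    HasFDerivAt (fun x' => b + c • (x' - x₀)) (c • ContinuousLinearMap.id ℝ E3) x := by
  have h1 : HasFDerivAt (fun x' : E3 => x' - x₀) (ContinuousLinearMap.id ℝ E3) x :=
    (hasFDerivAt_id x).sub_const x₀
  exact (h1.const_smul c).const_add b

lemma pd_comp_affine_const (j : Fin 3) {ψ : E3 → ℝ} {x : E3}
    (hψ : DifferentiableAt ℝ ψ (b + c • (x - x₀))) (K : ℝ) :
    pd j (fun x' => K * ψ (b + c • (x' - x₀))) x =
      (K * c) * pd j ψ (b + c • (x - x₀)) := by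
  unfold pd
  have hA := hasFDerivAt_affine b x₀ c x
  have hcomp : HasFDerivAt (fun x' => ψ (b + c • (x' - x₀)))
      ((fderiv ℝ ψ (b + c • (x - x₀))).comp (c • ContinuousLinearMap.id ℝ E3)) x :=
    hψ.hasFDerivAt.comp x hA
  have hK : HasFDerivAt (fun x' => K * ψ (b + c • (x' - x₀)))
      (K • ((fderiv ℝ ψ (b + c • (x - x₀))).comp (c • ContinuousLinearMap.id ℝ E3))) x :=
    hcomp.const_mul K
  rw [hK.fderiv]
  simp [ContinuousLinearMap.smul_apply, map_smul, smul_eq_mul]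
  ring

include hV in
lemma pdl_comp_affine (l : List (Fin 3)) {ψ : E3 → ℝ} (hψ : ContDiffOn ℝ (⊤ : ℕ∞) ψ V) (K : ℝ) :
    ∀ x, (b + c • (x - x₀)) ∈ V →
      pdl l (fun x' => K * ψ (b + c • (x' - x₀))) x =
        (K * c ^ l.length) * (pdl l ψ) (b + c • (x - x₀)) := by
  induction l with
  | nil => intro x hx; simp [pdl]
  | cons j l ih =>
    intro x hx
    have hU : IsOpen ((fun x' => b + c • (x' - x₀)) ⁻¹' V) := by
      apply hV.preimage
      exact continuous_const.add ((continuous_id.sub continuous_const).const_smul c)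
    have hEq : Set.EqOn (pdl l (fun x' => K * ψ (b + c • (x' - x₀))))
        (fun x' => (K * c ^ l.length) * (pdl l ψ) (b + c • (x' - x₀)))
        ((fun x' => b + c • (x' - x₀)) ⁻¹' V) := fun z hz => ih z hz
    have h1 : pdl (j :: l) (fun x' => K * ψ (b + c • (x' - x₀))) x =
        pd j (fun x' => (K * c ^ l.length) * (pdl l ψ) (b + c • (x' - x₀))) x :=
      pd_congr hU j hEq hx
    rw [h1]
    have hψl : DifferentiableAt ℝ (pdl l ψ) (b + c • (x - x₀)) := by
      have := contDiffOn_pdl hV l hψ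
      exact (this.differentiableOn (by simp)).differentiableAt (hV.mem_nhds hx)
    rw [pd_comp_affine_const b x₀ c j hψl (K * c ^ l.length)]
    have h2 : pdl (j :: l) ψ = pd j (pdl l ψ) := rfl
    rw [h2, List.length_cons, pow_succ]
    ring

end chain

lemma annulus_bound {Φ : E3 → ℝ} {V : Set E3} (hV : IsOpen V)
    (hΦ : AnalyticOnNhd ℝ Φ V) (R : ℝ)
    (hsub : {z : E3 | 1/2 ≤ ‖z‖ ∧ ‖z‖ ≤ R} ⊆ V) :
    ∃ K > 0, ∀ z : E3, 1/2 ≤ ‖z‖ → ‖z‖ ≤ R → ∀ n : ℕ,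
      ‖iteratedFDeriv ℝ n Φ z‖ ≤ K ^ (n+1) * n ! := by
  set S : Set E3 := {z : E3 | 1/2 ≤ ‖z‖ ∧ ‖z‖ ≤ R} with hSdef
  have hScompact : IsCompact S := by
    have h1 : S = Metric.closedBall 0 R ∩ {z : E3 | 1/2 ≤ ‖z‖} := by
      ext z
      simp only [hSdef, Set.mem_setOf_eq, Set.mem_inter_iff, Metric.mem_closedBall,
        dist_zero_right]
      tauto
    rw [h1]
    exact (isCompact_closedBall 0 R).inter_right
      (isClosed_le continuous_const continuous_norm)
  -- local bounds
  have hloc : ∀ w ∈ S, ∃ δ > (0:ℝ), ∃ Kw > (0:ℝ), ∀ z, dist z w < δ → ∀ n : ℕ,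
      ‖iteratedFDeriv ℝ n Φ z‖ ≤ Kw ^ (n+1) * n ! := by
    intro w hw
    obtain ⟨p, hpAt⟩ := hΦ w (hsub hw)
    obtain ⟨r, hpB⟩ := hpAt
    have hr0 : 0 < r := hpB.r_pos
    have hmin : (0:ℝ≥0∞) < min r 1 := lt_min hr0 (by norm_num)
    obtain ⟨ρnn, hρ1, hρ2⟩ := ENNReal.lt_iff_exists_nnreal_btwn.mp hmin
    have hρnn0 : 0 < ρnn := by
      have := hρ1
      simpa using this
    set ρ : ℝ := (ρnn : ℝ) with hρdef
    have hρ0 : (0:ℝ) < ρ := hρnn0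
    have hρr : ENNReal.ofReal ρ ≤ r := by
      rw [hρdef, ENNReal.ofReal_coe_nnreal]
      exact le_of_lt (lt_of_lt_of_le hρ2 (min_le_left _ _))
    have hρrad : (ρnn : ℝ≥0∞) < p.radius :=
      lt_of_lt_of_le (lt_of_lt_of_le hρ2 (min_le_left _ _)) hpB.r_le
    obtain ⟨C, hC0, hCb⟩ := p.norm_mul_pow_le_of_lt_radius hρrad
    have hcoef : ∀ k, ‖p k‖ * k ! * ρ^(0+k) ≤ C * (0+k)! := by
      intro k
      rw [Nat.zero_add]
      calc ‖p k‖ * (k ! : ℝ) * ρ^k = (‖p k‖ * ρ^k) * k ! := by ring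
      _ ≤ C * k ! := by
          have := hCb k
          have hk : (0:ℝ) ≤ (k ! : ℝ) := Nat.cast_nonneg _
          exact mul_le_mul_of_nonneg_right this hk
    have hQ := QQ w r C ρ hρ0 hρr (le_of_lt hC0)
    refine ⟨ρ/4, by positivity, max (2*C) (2/ρ), lt_max_of_lt_left (by positivity), ?_⟩
    intro z hz n
    have := hQ n 0 ℝ Φ p hpB hcoef z (le_of_lt hz)
    rw [Nat.zero_add] at this
    calc ‖iteratedFDeriv ℝ n Φ z‖ ≤ 2 * C * n ! * (2/ρ)^n := this
    _ ≤ max (2*C) (2/ρ) ^ (n+1) * n ! := by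
        rw [pow_succ']
        have h1 : 2*C ≤ max (2*C) (2/ρ) := le_max_left _ _
        have h2 : (2/ρ)^n ≤ max (2*C) (2/ρ) ^ n := by
          apply pow_le_pow_left₀ (by positivity) (le_max_right _ _)
        have h3 : (0:ℝ) ≤ (n ! : ℝ) := Nat.cast_nonneg _
        have h4 : (0:ℝ) ≤ (2/ρ)^n := by positivity
        have h5 : (2*C) * (2/ρ)^n ≤ (max (2*C) (2/ρ)) * (max (2*C) (2/ρ))^n :=
          mul_le_mul h1 h2 h4 (le_trans (by positivity) h1)
        calc 2 * C * (n ! : ℝ) * (2/ρ)^n = ((2*C) * (2/ρ)^n) * n ! := by ring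
        _ ≤ ((max (2*C) (2/ρ)) * (max (2*C) (2/ρ))^n) * n ! :=
            mul_le_mul_of_nonneg_right h5 h3
  choose! δ hδ Kw hKw hB using hloc
  obtain ⟨t, htS, hcover⟩ := hScompact.elim_nhds_subcover (fun w => Metric.ball w (δ w))
    (fun w hw => Metric.ball_mem_nhds w (hδ w hw))
  set K : ℝ := 1 + ∑ w ∈ t, |Kw w| with hKdef
  have hK1 : (1:ℝ) ≤ K := by
    rw [hKdef]
    have : (0:ℝ) ≤ ∑ w ∈ t, |Kw w| := Finset.sum_nonneg (fun w _ => abs_nonneg _)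
    linarith
  refine ⟨K, by linarith, ?_⟩
  intro z hz1 hz2 n
  have hzS : z ∈ S := ⟨hz1, hz2⟩
  obtain ⟨w, hwt, hzw⟩ := Set.mem_iUnion₂.mp (hcover hzS)
  have hwS : w ∈ S := htS w hwt
  have hKle : Kw w ≤ K := by
    rw [hKdef]
    have h1 : |Kw w| ≤ ∑ u ∈ t, |Kw u| :=
      Finset.single_le_sum (fun u _ => abs_nonneg (Kw u)) hwt
    have h2 : Kw w ≤ |Kw w| := le_abs_self _
    linarith
  calc ‖iteratedFDeriv ℝ n Φ z‖ ≤ Kw w ^ (n+1) * n ! := hB w hwS z hzw n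
  _ ≤ K ^ (n+1) * n ! := by
      have := pow_le_pow_left₀ (le_of_lt (hKw w hwS)) hKle (n+1)
      exact mul_le_mul_of_nonneg_right this (Nat.cast_nonneg _)

noncomputable def Phi : E3 → ℝ :=
  fun z => Real.exp (Real.log (∑ i, z i ^ 2) * (-1/2))

lemma sum_sq_eq (z : E3) : ∑ i, z i ^ 2 = ‖z‖ ^ 2 := by
  rw [EuclideanSpace.norm_eq]
  rw [Real.sq_sqrt (Finset.sum_nonneg fun i _ => sq_nonneg _)]
  congr 1
  funext i
  rw [Real.norm_eq_abs, sq_abs]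

lemma Phi_eq {z : E3} (hz : z ≠ 0) : Phi z = ‖z‖⁻¹ := by
  have hn : 0 < ‖z‖ := norm_pos_iff.mpr hz
  rw [Phi, sum_sq_eq, Real.log_pow]
  push_cast
  rw [show (2:ℝ) * Real.log ‖z‖ * (-1/2) = -Real.log ‖z‖ by ring]
  rw [Real.exp_neg, Real.exp_log hn]

lemma Phi_analytic : AnalyticOnNhd ℝ Phi {z : E3 | z ≠ 0} := by
  intro z hz
  have hQpos : 0 < ∑ i, z i ^ 2 := by
    rw [sum_sq_eq]
    have : 0 < ‖z‖ := norm_pos_iff.mpr hz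
    positivity
  have hQa : AnalyticAt ℝ (fun w : E3 => ∑ i, w i ^ 2) z := by
    apply Finset.analyticAt_fun_sum
    intro i _
    have hproj : AnalyticAt ℝ (fun w : E3 => w i) z :=
      (EuclideanSpace.proj (𝕜 := ℝ) i).analyticAt z
    exact hproj.pow 2
  have hlog : AnalyticAt ℝ (fun w : E3 => Real.log (∑ i, w i ^ 2)) z :=
    AnalyticAt.comp (g := Real.log) (f := fun w : E3 => ∑ i, w i ^ 2)
      (analyticAt_rlog hQpos) hQa
  have hmul : AnalyticAt ℝ (fun w : E3 => Real.log (∑ i, w i ^ 2) * (-1/2)) z :=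
    hlog.mul analyticAt_const
  exact hmul.rexp

lemma finRange_three : List.finRange 3 = [0, 1, 2] := by decide

lemma fact_tri (a b c : ℕ) : ((a+b+c)! : ℝ) ≤ 4^(a+b+c) * (a ! * b ! * c !) := by
  have h1 := fact_add_le_real (a+b) c
  have h2 := fact_add_le_real a b
  have h3 : (2:ℝ)^(a+b) ≤ 2^(a+b+c) := by
    apply pow_le_pow_right₀ (by norm_num)
    omega
  have h4 : (2:ℝ)^(a+b+c) * 2^(a+b+c) = 4^(a+b+c) := by
    rw [← mul_pow]; norm_num
  have hc : (0:ℝ) ≤ c ! := Nat.cast_nonneg _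
  have ha : (0:ℝ) ≤ a ! := Nat.cast_nonneg _
  have hb : (0:ℝ) ≤ b ! := Nat.cast_nonneg _
  have h2' : ((a+b)! : ℝ) ≤ 2^(a+b+c) * a ! * b ! := by
    refine h2.trans ?_
    have := mul_le_mul_of_nonneg_right (mul_le_mul_of_nonneg_right h3 ha) hb
    linarith
  calc ((a+b+c)! : ℝ) ≤ 2^(a+b+c) * (a+b)! * c ! := h1
  _ ≤ 2^(a+b+c) * (2^(a+b+c) * a ! * b !) * c ! := by
      have hp : (0:ℝ) < 2^(a+b+c) := by positivity
      have := mul_le_mul_of_nonneg_right (mul_le_mul_of_nonneg_left h2' (le_of_lt hp)) hc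
      linarith
  _ = (2^(a+b+c) * 2^(a+b+c)) * (a ! * b ! * c !) := by ring
  _ = 4^(a+b+c) * (a ! * b ! * c !) := by rw [h4]

/-- On a bounded neighbourhood `Ω` of `x₀` where `sup_s ‖(d_s f)(x,s) − I₃‖ ≤ 1/2`
(so `f(x,·)` is injective), there is `K₁ > 0` such that for every `y ≠ x₀` the function
`h(x) = |f(x,x₀) − f(x,y)|⁻¹` is well defined and smooth on `Ω` and
`|∂_x^α h(x)| ≤ K₁^{|α|+1} · α! · |x₀ − y|⁻¹`. -/
theorem stmt_17 (τ : EuclideanSpace ℝ (Fin 3) → ℝ) (hτ : ContDiff ℝ (⊤ : ℕ∞) τ)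
    (hsupp : HasCompactSupport τ) (x₀ : EuclideanSpace ℝ (Fin 3))
    (Ω : Set (EuclideanSpace ℝ (Fin 3))) (hΩo : IsOpen Ω)
    (hΩb : Bornology.IsBounded Ω) (hx₀ : x₀ ∈ Ω)
    (hder : ∀ x ∈ Ω, ∀ s, ‖fderiv ℝ (fun t => t + τ t • (x - x₀)) s
        - ContinuousLinearMap.id ℝ (EuclideanSpace ℝ (Fin 3))‖ ≤ 1 / 2) :
    ∃ K₁ > (0 : ℝ), ∀ y : EuclideanSpace ℝ (Fin 3), y ≠ x₀ →
      (∀ x ∈ Ω, x₀ + τ x₀ • (x - x₀) ≠ y + τ y • (x - x₀)) ∧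
      ContDiffOn ℝ (⊤ : ℕ∞)
        (fun x => ‖(x₀ + τ x₀ • (x - x₀)) - (y + τ y • (x - x₀))‖⁻¹) Ω ∧
      ∀ α : Fin 3 → ℕ, ∀ x ∈ Ω,
        |mpd α (fun x' => ‖(x₀ + τ x₀ • (x' - x₀)) - (y + τ y • (x' - x₀))‖⁻¹) x| ≤
          K₁ ^ (∑ i, α i + 1) * (∏ i, ((α i)! : ℝ)) * ‖x₀ - y‖⁻¹ := by
  classical
  -- Lipschitz constant for τ
  obtain ⟨Lnn, hLip⟩ := hτ.lipschitzWith_of_hasCompactSupport hsupp (by simp)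
  set L : ℝ := max (Lnn : ℝ) 1 with hLdef
  have hL1 : (1:ℝ) ≤ L := le_max_right _ _
  have hL0 : (0:ℝ) < L := lt_of_lt_of_le one_pos hL1
  -- bound on Ω
  obtain ⟨D₀, hD₀⟩ := hΩb.subset_closedBall x₀
  set D : ℝ := max D₀ 0 with hDdef
  have hD0 : (0:ℝ) ≤ D := le_max_right _ _
  have hD : ∀ x ∈ Ω, ‖x - x₀‖ ≤ D := by
    intro x hx
    have := hD₀ hx
    rw [Metric.mem_closedBall, dist_eq_norm] at this
    exact this.trans (le_max_left _ _)
  set R : ℝ := 1 + L * D with hRdef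
  have hVopen : IsOpen {z : E3 | z ≠ 0} := isOpen_ne
  obtain ⟨K, hK0, hKb⟩ := annulus_bound hVopen Phi_analytic R
    (fun z hz => by
      have : (0:ℝ) < ‖z‖ := lt_of_lt_of_le (by norm_num) hz.1
      exact norm_pos_iff.mp this)
  have hPhiCD : ContDiffOn ℝ (⊤ : ℕ∞) Phi {z : E3 | z ≠ 0} :=
    fun z hz => (Phi_analytic z hz).contDiffAt.contDiffWithinAt
  set K₁ : ℝ := max K (4 * L * K) with hK₁def
  have hK₁0 : 0 < K₁ := lt_max_of_lt_left hK0
  refine ⟨K₁, hK₁0, ?_⟩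
  intro y hy
  set v : E3 := x₀ - y with hvdef
  have hv0 : v ≠ 0 := sub_ne_zero.mpr (Ne.symm hy)
  have hnv : (0:ℝ) < ‖v‖ := norm_pos_iff.mpr hv0
  set c : ℝ := τ x₀ - τ y with hcdef
  have hcL : |c| ≤ L * ‖v‖ := by
    have h1 := hLip.dist_le_mul x₀ y
    rw [Real.dist_eq, dist_eq_norm] at h1
    calc |c| ≤ (Lnn : ℝ) * ‖x₀ - y‖ := h1
    _ ≤ L * ‖v‖ := by
        rw [hvdef]
        gcongr
        exact le_max_left _ _
  -- mean value bound
  have hMVT : ∀ x ∈ Ω, ‖c • (x - x₀)‖ ≤ 1/2 * ‖v‖ := by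
    intro x hx
    set G : E3 → E3 := fun s => τ s • (x - x₀) with hGdef
    have hGd : ∀ s, DifferentiableAt ℝ G s :=
      fun s => ((hτ.differentiable (by simp)) s).smul_const (x - x₀)
    have hfd : ∀ s, fderiv ℝ (fun t => t + τ t • (x - x₀)) s
        = ContinuousLinearMap.id ℝ E3 + fderiv ℝ G s := by
      intro s
      rw [fderiv_fun_add differentiableAt_fun_id (hGd s), fderiv_id']
    have hGnorm : ∀ s, ‖fderiv ℝ G s‖ ≤ 1/2 := by
      intro s
      have := hder x hx s
      rw [hfd s, add_sub_cancel_left] at this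
      exact this
    have := Convex.norm_image_sub_le_of_norm_fderiv_le
      (fun s _ => hGd s) (fun s _ => hGnorm s) convex_univ
      (Set.mem_univ y) (Set.mem_univ x₀)
    have hsub : G x₀ - G y = c • (x - x₀) := by
      rw [hGdef]
      simp only [hcdef]
      rw [sub_smul]
    rw [hsub] at this
    calc ‖c • (x - x₀)‖ ≤ 1/2 * ‖x₀ - y‖ := this
    _ = 1/2 * ‖v‖ := by rw [hvdef]
  set g : E3 → E3 := fun x => v + c • (x - x₀) with hgdef
  have hglow : ∀ x ∈ Ω, ‖v‖/2 ≤ ‖g x‖ := by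
    intro x hx
    have h1 : v = g x - c • (x - x₀) := by simp [hgdef]
    have h2 : ‖v‖ ≤ ‖g x‖ + ‖c • (x - x₀)‖ := by
      rw [h1]; exact norm_sub_le _ _
    have := hMVT x hx
    linarith
  have hgne : ∀ x ∈ Ω, g x ≠ 0 := by
    intro x hx
    have := hglow x hx
    have : (0:ℝ) < ‖g x‖ := by linarith
    exact norm_pos_iff.mp this
  have hghigh : ∀ x ∈ Ω, ‖g x‖ ≤ R * ‖v‖ := by
    intro x hx
    have h1 : ‖g x‖ ≤ ‖v‖ + ‖c • (x - x₀)‖ := norm_add_le _ _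
    have h2 : ‖c • (x - x₀)‖ = |c| * ‖x - x₀‖ := by
      rw [norm_smul, Real.norm_eq_abs]
    have h3 : |c| * ‖x - x₀‖ ≤ (L * ‖v‖) * D := by
      apply mul_le_mul hcL (hD x hx) (norm_nonneg _)
      positivity
    rw [hRdef]
    nlinarith
  have halg : ∀ x : E3, (x₀ + τ x₀ • (x - x₀)) - (y + τ y • (x - x₀)) = g x := by
    intro x
    simp only [hgdef, hvdef, hcdef]
    rw [sub_smul]
    abel
  have hfun_eq : (fun x => ‖(x₀ + τ x₀ • (x - x₀)) - (y + τ y • (x - x₀))‖⁻¹)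
      = fun x => ‖g x‖⁻¹ := funext fun x => by rw [halg x]
  refine ⟨?_, ?_, ?_⟩
  · intro x hx hEq
    exact hgne x hx (by rw [← halg x, hEq, sub_self])
  · rw [hfun_eq]
    intro x hx
    apply ContDiffAt.contDiffWithinAt
    have hgc : ContDiffAt ℝ (⊤ : ℕ∞) g x := by
      apply ContDiffAt.add contDiffAt_const
      exact (contDiffAt_id.sub contDiffAt_const).const_smul c
    exact (hgc.norm ℝ (hgne x hx)).inv (ne_of_gt (lt_of_lt_of_le (by positivity) (hglow x hx)))
  · intro α x hx
    rw [hfun_eq]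
    set n : ℕ := ∑ i, α i with hndef
    set cb : ℝ := c / ‖v‖ with hcbdef
    set b : E3 := ‖v‖⁻¹ • v with hbdef
    set Amap : E3 → E3 := fun x' => b + cb • (x' - x₀) with hAdef
    have hA_eq : ∀ x' : E3, Amap x' = ‖v‖⁻¹ • g x' := by
      intro x'
      simp only [hAdef, hbdef, hcbdef, hgdef, smul_add, smul_smul, div_eq_mul_inv, mul_comm]
    have hAnorm : ∀ x' : E3, ‖Amap x'‖ = ‖v‖⁻¹ * ‖g x'‖ := by
      intro x'
      rw [hA_eq x', norm_smul, norm_inv, norm_norm]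
    have hUopen : IsOpen (Amap ⁻¹' {z : E3 | z ≠ 0}) := by
      apply hVopen.preimage
      exact continuous_const.add ((continuous_id.sub continuous_const).const_smul cb)
    have hΩU : ∀ x' ∈ Ω, Amap x' ∈ {z : E3 | z ≠ 0} := by
      intro x' hx'
      have h1 : ‖Amap x'‖ = ‖v‖⁻¹ * ‖g x'‖ := hAnorm x'
      have h2 := hglow x' hx'
      have : (0:ℝ) < ‖Amap x'‖ := by
        rw [h1]
        have : (0:ℝ) < ‖g x'‖ := by linarith
        positivity
      exact norm_pos_iff.mp this
    have hEqOn : Set.EqOn (fun x' => ‖g x'‖⁻¹)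
        (fun x' => ‖v‖⁻¹ * Phi (b + cb • (x' - x₀))) (Amap ⁻¹' {z : E3 | z ≠ 0}) := by
      intro z hz
      have hAz : Amap z ≠ 0 := hz
      have hgz : g z ≠ 0 := by
        intro h0
        apply hAz
        rw [hA_eq z, h0, smul_zero]
      show ‖g z‖⁻¹ = ‖v‖⁻¹ * Phi (Amap z)
      rw [Phi_eq hAz, hAnorm z]
      have hgz' : ‖g z‖ ≠ 0 := norm_ne_zero_iff.mpr hgz
      have hv' : ‖v‖ ≠ 0 := ne_of_gt hnv
      field_simp
    set Lst : List (Fin 3) := (List.finRange 3).flatMap (fun j => List.replicate (α j) j)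
      with hLstdef
    have hLen : Lst.length = n := by
      rw [hLstdef, List.length_flatMap, finRange_three, hndef]
      simp [Fin.sum_univ_three]
      omega
    have hxU : x ∈ Amap ⁻¹' {z : E3 | z ≠ 0} := hΩU x hx
    have step1 : mpd α (fun x' => ‖g x'‖⁻¹) x
        = pdl Lst (fun x' => ‖v‖⁻¹ * Phi (b + cb • (x' - x₀))) x := by
      rw [mpd_eq_pdl]
      exact pdl_congr hUopen Lst hEqOn hxU
    have step2 : pdl Lst (fun x' => ‖v‖⁻¹ * Phi (b + cb • (x' - x₀))) x
        = (‖v‖⁻¹ * cb ^ Lst.length) * (pdl Lst Phi) (b + cb • (x - x₀)) :=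
      pdl_comp_affine hVopen b x₀ cb Lst hPhiCD (‖v‖⁻¹) x hxU
    have hAx : Amap x ∈ {z : E3 | z ≠ 0} := hxU
    have step3 : |pdl Lst Phi (Amap x)| ≤ ‖iteratedFDeriv ℝ n Phi (Amap x)‖ := by
      rw [foldr_pd_eq hVopen Phi_analytic Lst (Amap x) hAx]
      have h1 := (iteratedFDeriv ℝ Lst.length Phi (Amap x)).le_opNorm
        (fun i => EuclideanSpace.single (Lst.get i) 1)
      have h2 : ∏ i : Fin Lst.length, ‖EuclideanSpace.single (Lst.get i) (1:ℝ)‖ = 1 := by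
        apply Finset.prod_eq_one
        intro i _
        rw [EuclideanSpace.norm_single]
        norm_num
      rw [h2, mul_one] at h1
      rw [← Real.norm_eq_abs]
      have h3 : ‖iteratedFDeriv ℝ Lst.length Phi (Amap x)‖
          = ‖iteratedFDeriv ℝ n Phi (Amap x)‖ := by rw [hLen]
      rw [← h3]
      exact h1
    have hAx_low : 1/2 ≤ ‖Amap x‖ := by
      rw [hAnorm x]
      have h2 := hglow x hx
      have h3 : ‖v‖⁻¹ * (‖v‖/2) ≤ ‖v‖⁻¹ * ‖g x‖ := by gcongr
      have h4 : ‖v‖⁻¹ * (‖v‖/2) = 1/2 := by field_simp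
      linarith
    have hAx_high : ‖Amap x‖ ≤ R := by
      rw [hAnorm x]
      have h2 := hghigh x hx
      calc ‖v‖⁻¹ * ‖g x‖ ≤ ‖v‖⁻¹ * (R * ‖v‖) := by gcongr
      _ = R := by field_simp
    have step4 : ‖iteratedFDeriv ℝ n Phi (Amap x)‖ ≤ K ^ (n+1) * n ! :=
      hKb (Amap x) hAx_low hAx_high n
    have hcb : |cb| ≤ L := by
      rw [hcbdef, abs_div, abs_of_pos hnv]
      rw [div_le_iff₀ hnv]
      exact hcL
    -- factorials
    have hfact : (n ! : ℝ) ≤ 4^n * ∏ i, ((α i)! : ℝ) := by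
      have h1 : n = α 0 + α 1 + α 2 := by rw [hndef, Fin.sum_univ_three]
      have h2 : (∏ i, ((α i)! : ℝ)) = (α 0)! * (α 1)! * (α 2)! := by
        rw [Fin.prod_univ_three]
      rw [h1, h2]
      exact fact_tri (α 0) (α 1) (α 2)
    -- combine
    rw [step1, step2, hLen]
    have habs : |(‖v‖⁻¹ * cb ^ n) * (pdl Lst Phi) (Amap x)|
        = ‖v‖⁻¹ * |cb|^n * |pdl Lst Phi (Amap x)| := by
      rw [abs_mul, abs_mul, abs_pow, abs_of_pos (by positivity : (0:ℝ) < ‖v‖⁻¹)]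
    have hchain : |(‖v‖⁻¹ * cb ^ n) * (pdl Lst Phi) (Amap x)|
        ≤ ‖v‖⁻¹ * L^n * (K^(n+1) * n !) := by
      rw [habs]
      have h1 : |cb|^n ≤ L^n := pow_le_pow_left₀ (abs_nonneg _) hcb n
      have h2 := step3.trans step4
      apply mul_le_mul
      · gcongr
      · exact h2
      · exact abs_nonneg _
      · positivity
    have hfinal : ‖v‖⁻¹ * L^n * (K^(n+1) * (n ! : ℝ))
        ≤ K₁ ^ (n+1) * (∏ i, ((α i)! : ℝ)) * ‖v‖⁻¹ := by
      have h1 : L^n * K^(n+1) * 4^n ≤ K₁^(n+1) := by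
        have h2 : L^n * K^(n+1) * 4^n = K * (4*L*K)^n := by
          rw [mul_pow, mul_pow, pow_succ]
          ring
        rw [h2, pow_succ']
        have h3 : K ≤ K₁ := le_max_left _ _
        have h4 : (4*L*K)^n ≤ K₁^n :=
          pow_le_pow_left₀ (by positivity) (le_max_right _ _) n
        apply mul_le_mul h3 h4 (by positivity) (le_of_lt hK₁0)
      calc ‖v‖⁻¹ * L^n * (K^(n+1) * (n ! : ℝ))
          ≤ ‖v‖⁻¹ * L^n * (K^(n+1) * (4^n * ∏ i, ((α i)! : ℝ))) := by gcongr
      _ = (L^n * K^(n+1) * 4^n) * (∏ i, ((α i)! : ℝ)) * ‖v‖⁻¹ := by ring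
      _ ≤ K₁^(n+1) * (∏ i, ((α i)! : ℝ)) * ‖v‖⁻¹ := by
          gcongr
    exact hchain.trans hfinal
end
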